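/- arXiv:2504.18999 — 8 statements merged into one kernel-verified Lean document; each statement's English description precedes it below -/
import Mathlib

section
/- Let Q be a probability measure on a measurable space Y, let A ⊆ Y be a measurable set with Q(A) > 0, and let φ : ℝ → ℝ be convex with φ(1) = 0. Then for every probability measure P on Y with P ≪ Q and P(Aᶜ) = 0 (and such that φ ∘ (dP/dQ) is Q-integrable), one has D_φ(P‖Q) ≥ Q(A)·φ(1/Q(A)) + Q(Aᶜ)·φ(0). Moreover, equality holds for the conditional measure Q(·|A), i.e. D_φ(Q(·|A)‖Q) = Q(A)·φ(1/Q(A)) + Q(Aᶜ)·φ(0). -/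
/-!
Split `∫ φ (dP/dQ) dQ` over `A` and `Aᶜ` and apply Jensen's inequality on each piece: the
`Q`-average of `dP/dQ` over a set `B` is `P(B)/Q(B)`, which is `1/Q(A)` on `A` and `0` on `Aᶜ`
when `P` is carried by `A`. For `Q(·|A)` the density is constant on both pieces, so Jensen's
inequality is an equality.
-/

open MeasureTheory ProbabilityTheory

namespace MeasureTheory

open Set

variable {α : Type*} [MeasurableSpace α] {μ ν : Measure α} {f : ℝ → ℝ} {s : Set α}

lemma mul_le_setIntegral_rnDeriv_of_ac [IsFiniteMeasure μ] [IsFiniteMeasure ν]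
    (hf_cvx : ConvexOn ℝ (Ici 0) f) (hf_cont : ContinuousWithinAt f (Ici 0) 0)
    (hf_int : IntegrableOn (fun x ↦ f (μ.rnDeriv ν x).toReal) s ν) (hμν : μ ≪ ν) :
    ν.real s * f (μ.real s / ν.real s) ≤ ∫ x in s, f (μ.rnDeriv ν x).toReal ∂ν := by
  rcases eq_or_ne (ν s) 0 with hνs | hνs
  · simp [measureReal_def, hνs]
  have hνs_pos : 0 < ν.real s := ENNReal.toReal_pos hνs (measure_ne_top ν s)
  have jensen := hf_cvx.map_set_average_le (hf_cvx.continuousOn_Ici hf_cont) isClosed_Ici hνs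
    (measure_ne_top ν s) (ae_of_all _ fun _ ↦ ENNReal.toReal_nonneg)
    Measure.integrable_toReal_rnDeriv.integrableOn hf_int
  rwa [setAverage_eq, setAverage_eq, Measure.setIntegral_toReal_rnDeriv hμν, smul_eq_mul,
    smul_eq_mul, inv_mul_eq_div, le_inv_mul_iff₀ hνs_pos] at jensen

lemma mul_add_mul_le_integral_rnDeriv_of_ac [IsFiniteMeasure μ] [IsFiniteMeasure ν]
    (hf_cvx : ConvexOn ℝ (Ici 0) f) (hf_cont : ContinuousWithinAt f (Ici 0) 0)
    (hf_int : Integrable (fun x ↦ f (μ.rnDeriv ν x).toReal) ν) (hμν : μ ≪ ν)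
    (hs : MeasurableSet s) :
    ν.real s * f (μ.real s / ν.real s) + ν.real sᶜ * f (μ.real sᶜ / ν.real sᶜ) ≤
      ∫ x, f (μ.rnDeriv ν x).toReal ∂ν := by
  rw [← integral_add_compl hs hf_int]
  gcongr <;> exact mul_le_setIntegral_rnDeriv_of_ac hf_cvx hf_cont hf_int.integrableOn hμν

lemma rnDeriv_cond_ae_eq [SigmaFinite μ] (hs : MeasurableSet s) :
    (μ[|s]).rnDeriv μ =ᵐ[μ] (μ s)⁻¹ • s.indicator 1 := by
  have h_cond : μ[|s] = μ.withDensity ((μ s)⁻¹ • s.indicator 1) := by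
    rw [withDensity_smul _ (measurable_one.indicator hs), withDensity_indicator_one hs]
    rfl
  rw [h_cond]
  exact Measure.rnDeriv_withDensity μ ((measurable_one.indicator hs).const_smul _)

lemma integral_rnDeriv_cond [IsFiniteMeasure μ] (hs : MeasurableSet s) :
    ∫ x, f ((μ[|s]).rnDeriv μ x).toReal ∂μ = μ.real s * f (μ.real s)⁻¹ + μ.real sᶜ * f 0 := by
  classical
  have h_piecewise : ∀ᵐ x ∂μ, f ((μ[|s]).rnDeriv μ x).toReal =
      s.piecewise (fun _ ↦ f (μ.real s)⁻¹) (fun _ ↦ f 0) x := by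
    filter_upwards [rnDeriv_cond_ae_eq hs] with x hx
    by_cases hxs : x ∈ s <;> simp [hx, hxs, measureReal_def]
  rw [integral_congr_ae h_piecewise,
    integral_piecewise hs (integrableOn_const (measure_ne_top _ _))
      (integrableOn_const (measure_ne_top _ _)),
    setIntegral_const, setIntegral_const, smul_eq_mul, smul_eq_mul]

end MeasureTheory

theorem stmt_0_general {Y : Type*} [MeasurableSpace Y]
    (Q : Measure Y) [IsProbabilityMeasure Q]
    (A : Set Y) (hA : MeasurableSet A)
    (φ : ℝ → ℝ) (hφconv : ConvexOn ℝ Set.univ φ) :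
    (∀ P : Measure Y, IsProbabilityMeasure P → P ≪ Q → P Aᶜ = 0 →
      Integrable (fun y => φ ((P.rnDeriv Q y).toReal)) Q →
      (Q A).toReal * φ (1 / (Q A).toReal) + (Q Aᶜ).toReal * φ 0 ≤
        ∫ y, φ ((P.rnDeriv Q y).toReal) ∂Q) ∧
    ∫ y, φ (((Q[|A]).rnDeriv Q y).toReal) ∂Q =
      (Q A).toReal * φ (1 / (Q A).toReal) + (Q Aᶜ).toReal * φ 0 := by
  refine ⟨fun P _ hPQ hPAc hφP ↦ ?_, by rw [integral_rnDeriv_cond hA, one_div]; rfl⟩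
  have hPA : P.real A = 1 := by
    rw [measureReal_def, (prob_compl_eq_zero_iff hA).mp hPAc, ENNReal.toReal_one]
  have hPAc' : P.real Aᶜ = 0 := by rw [measureReal_def, hPAc, ENNReal.toReal_zero]
  have jensen := mul_add_mul_le_integral_rnDeriv_of_ac
    (hφconv.subset (Set.subset_univ _) (convex_Ici 0))
    ((hφconv.continuousOn isOpen_univ).continuousAt Filter.univ_mem).continuousWithinAt
    hφP hPQ hA
  rwa [hPA, hPAc', zero_div] at jensen

/-- For a probability measure `Q`, a measurable set `A` with `Q A > 0`,
and a convex `φ : ℝ → ℝ` with `φ 1 = 0`, every probability measure `P ≪ Q` with `P Aᶜ = 0`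
(and `φ ∘ dP/dQ` integrable w.r.t. `Q`) satisfies
`D_φ(P‖Q) ≥ Q(A)·φ(1/Q(A)) + Q(Aᶜ)·φ(0)`, and equality holds for the conditional
measure `Q(·|A)`. -/
theorem stmt_0 {Y : Type*} [MeasurableSpace Y]
    (Q : Measure Y) [IsProbabilityMeasure Q]
    (A : Set Y) (hA : MeasurableSet A) (hQA : 0 < Q A)
    (φ : ℝ → ℝ) (hφconv : ConvexOn ℝ Set.univ φ) (hφ1 : φ 1 = 0) :
    (∀ P : Measure Y, IsProbabilityMeasure P → P ≪ Q → P Aᶜ = 0 →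
      Integrable (fun y => φ ((P.rnDeriv Q y).toReal)) Q →
      (Q A).toReal * φ (1 / (Q A).toReal) + (Q Aᶜ).toReal * φ 0 ≤
        ∫ y, φ ((P.rnDeriv Q y).toReal) ∂Q) ∧
    ∫ y, φ (((Q[|A]).rnDeriv Q y).toReal) ∂Q =
      (Q A).toReal * φ (1 / (Q A).toReal) + (Q Aᶜ).toReal * φ 0 :=
  stmt_0_general Q A hA φ hφconv
end

section
/- Let Θ be a measurable space, G : Θ → ℝⁿ measurable, R ⊆ ℝⁿ a measurable set, and F : ℝⁿ → Θ a measurable map satisfying G(F(y)) = y for every y ∈ R. Let ρ_y be a probability measure on ℝⁿ with ρ_y(R) > 0, and let φ : ℝ → ℝ be convex with φ(1) = 0. Define ρ_x* := F_#(ρ_y(·|R)). Then (i) G_# ρ_x* = ρ_y(·|R), and (ii) for every probability measure ρ on Θ with G_# ρ ≪ ρ_y and G_# ρ supported in R (and with φ ∘ d(G_#ρ)/dρ_y Q-integrable), D_φ(G_# ρ_x* ‖ ρ_y) ≤ D_φ(G_# ρ ‖ ρ_y). That is, the pushforward of any minimizer of ρ ↦ D_φ(G_#ρ‖ρ_y)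 is the conditional distribution of ρ_y on R. -/
/-!
By `G ∘ F = id` on `R`, pushing `ρy(·|R)` forward by `F` and then by `G` gives back `ρy(·|R)`.
Its density with respect to `ρy` is `ρy(R)⁻¹` on `R` and `0` off `R`, so its divergence is
`ρy(R) φ(ρy(R)⁻¹) + ρy(Rᶜ) φ(0)`. The density of any `Q ≪ ρy` concentrated on `R` also vanishes
off `R` and has mean `ρy(R)⁻¹` over `R`, so Jensen's inequality on `R` bounds its divergence
below by the same quantity.
-/

open MeasureTheory ProbabilityTheory

namespace MeasureTheory

variable {α β : Type*} [MeasurableSpace α] [MeasurableSpace β] {μ : Measure α} {s : Set α}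

theorem Measure.map_map_eq_self_of_ae_leftInverse {F : α → β} {G : β → α}
    (hG : Measurable G) (hF : Measurable F) (hGF : G ∘ F =ᵐ[μ] id) :
    (μ.map F).map G = μ := by
  rw [Measure.map_map hG hF, Measure.map_congr hGF, Measure.map_id]

theorem Measure.map_map_cond_eq_cond {F : α → β} {G : β → α}
    (hG : Measurable G) (hF : Measurable F) (hs : MeasurableSet s) (hGF : Set.LeftInvOn G F s) :
    ((μ[|s]).map F).map G = μ[|s] :=
  Measure.map_map_eq_self_of_ae_leftInverse hG hF <| (ae_cond_mem hs).mono fun _ hx => hGF hx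

theorem Measure.rnDeriv_cond_self [SigmaFinite μ] (hs : MeasurableSet s) (hμs : μ s ≠ 0) :
    (μ[|s]).rnDeriv μ =ᵐ[μ] s.indicator fun _ => (μ s)⁻¹ := by
  filter_upwards [Measure.rnDeriv_smul_left_of_ne_top' (μ.restrict s) μ (ENNReal.inv_ne_top.2 hμs),
    Measure.rnDeriv_restrict_self μ hs] with x hsmul hrestrict
  by_cases hx : x ∈ s <;> simp [ProbabilityTheory.cond, hsmul, hrestrict, hx]

theorem Measure.rnDeriv_ae_eq_zero_of_measure_eq_zero {ν : Measure α}
    [ν.HaveLebesgueDecomposition μ] [SFinite μ]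
    (hνμ : ν ≪ μ) (hνs : ν s = 0) : ∀ᵐ x ∂μ.restrict s, ν.rnDeriv μ x = 0 := by
  have : ∫⁻ x in s, ν.rnDeriv μ x ∂μ = 0 := by rwa [Measure.setLIntegral_rnDeriv hνμ]
  exact (lintegral_eq_zero_iff (Measure.measurable_rnDeriv ν μ)).1 this

theorem integral_comp_indicator_const [IsFiniteMeasure μ] (hs : MeasurableSet s) (φ : ℝ → ℝ)
    (c : ℝ) : ∫ x, φ (s.indicator (fun _ => c) x) ∂μ = μ.real s * φ c + μ.real sᶜ * φ 0 := by
  classical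
  have : (fun x => φ (s.indicator (fun _ => c) x)) = s.piecewise (fun _ => φ c) fun _ => φ 0 := by
    ext x; by_cases hx : x ∈ s <;> simp [hx]
  rw [this, integral_piecewise hs integrableOn_const integrableOn_const]
  simp

theorem integral_comp_toReal_rnDeriv_cond [IsFiniteMeasure μ] (hs : MeasurableSet s)
    (hμs : μ s ≠ 0) (φ : ℝ → ℝ) :
    ∫ x, φ ((μ[|s]).rnDeriv μ x).toReal ∂μ = μ.real s * φ (μ.real s)⁻¹ + μ.real sᶜ * φ 0 := by
  rw [← integral_comp_indicator_const hs]
  refine integral_congr_ae ?_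
  filter_upwards [Measure.rnDeriv_cond_self hs hμs] with x hx
  by_cases hxs : x ∈ s <;> simp [hx, hxs, measureReal_def]

end MeasureTheory

section Jensen

variable {α : Type*} [MeasurableSpace α] {μ : Measure α} {s : Set α}

theorem ConvexOn.measureReal_mul_map_setAverage_le [IsFiniteMeasure μ] {φ : ℝ → ℝ} {f : α → ℝ}
    (hφ : ConvexOn ℝ Set.univ φ) (hμs : μ s ≠ 0)
    (hf : IntegrableOn f s μ) (hφf : IntegrableOn (fun x => φ (f x)) s μ) :
    μ.real s * φ (⨍ x in s, f x ∂μ) ≤ ∫ x in s, φ (f x) ∂μ :=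
  calc μ.real s * φ (⨍ x in s, f x ∂μ) ≤ μ.real s * ⨍ x in s, φ (f x) ∂μ := by
        gcongr
        exact hφ.map_set_average_le (hφ.continuousOn isOpen_univ) isClosed_univ hμs
          (measure_ne_top _ _) (by simp) hf hφf
    _ = ∫ x in s, φ (f x) ∂μ := measure_smul_setAverage _ (measure_ne_top _ _)

theorem ConvexOn.le_integral_comp_toReal_rnDeriv_of_measure_compl_eq_zero [IsFiniteMeasure μ]
    {ν : Measure α} [IsFiniteMeasure ν] {φ : ℝ → ℝ} (hφ : ConvexOn ℝ Set.univ φ)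
    (hs : MeasurableSet s) (hμs : μ s ≠ 0) (hνμ : ν ≪ μ) (hνs : ν sᶜ = 0)
    (hint : Integrable (fun x => φ (ν.rnDeriv μ x).toReal) μ) :
    μ.real s * φ (ν.real s / μ.real s) + μ.real sᶜ * φ 0 ≤
      ∫ x, φ (ν.rnDeriv μ x).toReal ∂μ := by
  have hmean : ⨍ x in s, (ν.rnDeriv μ x).toReal ∂μ = ν.real s / μ.real s := by
    rw [setAverage_eq, Measure.setIntegral_toReal_rnDeriv hνμ, smul_eq_mul, inv_mul_eq_div]
  have hon : μ.real s * φ (ν.real s / μ.real s) ≤ ∫ x in s, φ (ν.rnDeriv μ x).toReal ∂μ :=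
    hmean ▸ hφ.measureReal_mul_map_setAverage_le hμs Measure.integrable_toReal_rnDeriv.integrableOn
      hint.integrableOn
  have hoff : ∫ x in sᶜ, φ (ν.rnDeriv μ x).toReal ∂μ = μ.real sᶜ * φ 0 := by
    rw [← smul_eq_mul, ← setIntegral_const]
    refine integral_congr_ae ?_
    filter_upwards [Measure.rnDeriv_ae_eq_zero_of_measure_eq_zero hνμ hνs] with x hx
    simp [hx]
  rw [← integral_add_compl hs hint, hoff]
  exact add_le_add_left hon _

end Jensen

theorem stmt_1_general {Θ : Type*} [MeasurableSpace Θ] {n : ℕ}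
    (G : Θ → EuclideanSpace ℝ (Fin n)) (hG : Measurable G)
    (R : Set (EuclideanSpace ℝ (Fin n))) (hR : MeasurableSet R)
    (F : EuclideanSpace ℝ (Fin n) → Θ) (hF : Measurable F)
    (hGF : ∀ y ∈ R, G (F y) = y)
    (ρy : Measure (EuclideanSpace ℝ (Fin n))) [IsProbabilityMeasure ρy]
    (hρyR : 0 < ρy R)
    (φ : ℝ → ℝ) (hφconv : ConvexOn ℝ Set.univ φ) :
    ((ρy[|R]).map F).map G = ρy[|R] ∧
    ∀ ρ : Measure Θ, IsProbabilityMeasure ρ →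
      ρ.map G ≪ ρy → (ρ.map G) Rᶜ = 0 →
      Integrable (fun y => φ (((ρ.map G).rnDeriv ρy y).toReal)) ρy →
      ∫ y, φ (((((ρy[|R]).map F).map G).rnDeriv ρy y).toReal) ∂ρy ≤
        ∫ y, φ (((ρ.map G).rnDeriv ρy y).toReal) ∂ρy := by
  have hcond : ((ρy[|R]).map F).map G = ρy[|R] := Measure.map_map_cond_eq_cond hG hF hR hGF
  refine ⟨hcond, fun ρ _ hQρ hQRc hint => ?_⟩
  have := Measure.isProbabilityMeasure_map (μ := ρ) hG.aemeasurable
  have hQR : (ρ.map G).real R = 1 := by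
    rw [measureReal_def, (prob_compl_eq_zero_iff hR).1 hQRc, ENNReal.toReal_one]
  rw [hcond, integral_comp_toReal_rnDeriv_cond hR hρyR.ne']
  simpa [hQR] using
    hφconv.le_integral_comp_toReal_rnDeriv_of_measure_compl_eq_zero hR hρyR.ne' hQρ hQRc hint

/-- Let `G : Θ → ℝⁿ` be measurable, `R ⊆ ℝⁿ` measurable, and
`F : ℝⁿ → Θ` a measurable map with `G (F y) = y` for every `y ∈ R`. Let `ρy` be a
probability measure on `ℝⁿ` with `ρy R > 0`, and `φ` convex with `φ 1 = 0`.
With `ρx* := F_#(ρy(·|R))`: (i) `G_# ρx* = ρy(·|R)`, and (ii) for every probability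
measure `ρ` on `Θ` with `G_#ρ ≪ ρy` supported in `R` (with the divergence integrand
integrable), `D_φ(G_#ρx*‖ρy) ≤ D_φ(G_#ρ‖ρy)`. -/
theorem stmt_1 {Θ : Type*} [MeasurableSpace Θ] {n : ℕ}
    (G : Θ → EuclideanSpace ℝ (Fin n)) (hG : Measurable G)
    (R : Set (EuclideanSpace ℝ (Fin n))) (hR : MeasurableSet R)
    (F : EuclideanSpace ℝ (Fin n) → Θ) (hF : Measurable F)
    (hGF : ∀ y ∈ R, G (F y) = y)
    (ρy : Measure (EuclideanSpace ℝ (Fin n))) [IsProbabilityMeasure ρy]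
    (hρyR : 0 < ρy R)
    (φ : ℝ → ℝ) (hφconv : ConvexOn ℝ Set.univ φ) (hφ1 : φ 1 = 0) :
    ((ρy[|R]).map F).map G = ρy[|R] ∧
    ∀ ρ : Measure Θ, IsProbabilityMeasure ρ →
      ρ.map G ≪ ρy → (ρ.map G) Rᶜ = 0 →
      Integrable (fun y => φ (((ρ.map G).rnDeriv ρy y).toReal)) ρy →
      ∫ y, φ (((((ρy[|R]).map F).map G).rnDeriv ρy y).toReal) ∂ρy ≤
        ∫ y, φ (((ρ.map G).rnDeriv ρy y).toReal) ∂ρy :=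
  stmt_1_general G hG R hR F hF hGF ρy hρyR φ hφconv
end

section
/- Let Θ ⊆ ℝᵐ be compact, G : Θ → ℝⁿ continuous, p ≥ 1, and let F : ℝⁿ → Θ be a measurable map satisfying ‖G(F(y)) − y‖ ≤ ‖G(x) − y‖ for every x ∈ Θ and y ∈ ℝⁿ (so G(F(y)) is a nearest point of the range of G to y). Let ρ_y be a probability measure on ℝⁿ. Then: (i) for every probability measure ρ on Θ and every coupling π ∈ Γ(G_#ρ, ρ_y), ∫ ‖u − v‖^p dπ(u,v) ≥ ∫ ‖G(F(y)) − y‖^p dρ_y(y); and (ii) the measure ((G∘F) × id)_# ρ_y is a coupling of G_#(F_# ρ_y) and ρ_y whose cost ∫ ‖u − v‖^p equals ∫ ‖G(F(y)) − y‖^p dρ_y(y). Consequently ρ_x* = F_# ρ_y minimizes the p-Wasserstein distance W_p(G_#ρ, ρ_y) over probability measures ρ on Θ. -/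
/-!
Let `S` be the set of points `u` with `‖G (F y) - y‖ ≤ ‖u - y‖` for every `y`. It is closed and
contains `G '' Θ`, so every coupling `cpl` of `G_#ρ` and `ρy` is carried by `S × ℝⁿ`; on that set the
cost `‖u - v‖ ^ p` dominates `‖G (F v) - v‖ ^ p`, whose `cpl`-integral is its `ρy`-integral.
The graph coupling of `y ↦ G (F y)` attains this lower bound.
-/

open MeasureTheory Real

/-- `cpl` is a coupling of `μ` and `ν`: a measure on the product whose marginals
are `μ` and `ν`. -/
def IsCoupling {X Y : Type*} [MeasurableSpace X] [MeasurableSpace Y]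
    (μ : Measure X) (ν : Measure Y) (cpl : Measure (X × Y)) : Prop :=
  cpl.map Prod.fst = μ ∧ cpl.map Prod.snd = ν

section Coupling

variable {X Y : Type*} [MeasurableSpace X] [MeasurableSpace Y]

theorem IsCoupling.lintegral_snd_le {μ : Measure X} {ν : Measure Y} {cpl : Measure (X × Y)}
    (h : IsCoupling μ ν cpl) {g : Y → ENNReal} (hg : Measurable g) {c : X × Y → ENNReal}
    {S : Set X} (hμS : μ Sᶜ = 0) (hgc : ∀ x ∈ S, ∀ y, g y ≤ c (x, y)) :
    ∫⁻ y, g y ∂ν ≤ ∫⁻ z, c z ∂cpl := by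
  have hcplS : ∀ᵐ z ∂cpl, z.1 ∈ S :=
    ae_of_ae_map measurable_fst.aemeasurable (h.1 ▸ mem_ae_iff.2 hμS)
  rw [← h.2, lintegral_map hg measurable_snd]
  exact lintegral_mono_ae (hcplS.mono fun z hz => hgc z.1 hz z.2)

theorem isCoupling_map_graph (ν : Measure Y) {f : Y → X} (hf : Measurable f) :
    IsCoupling (ν.map f) ν (ν.map fun y => (f y, y)) := by
  have hgraph : Measurable fun y => (f y, y) := hf.prodMk measurable_id
  refine ⟨?_, ?_⟩
  · rw [Measure.map_map measurable_fst hgraph]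
    rfl
  · rw [Measure.map_map measurable_snd hgraph]
    exact Measure.map_id

theorem iInf_lintegral_isCoupling_mono {μ₀ μ : Measure X} {ν : Measure Y}
    {c : X × Y → ENNReal} {cpl₀ : Measure (X × Y)} (h₀ : IsCoupling μ₀ ν cpl₀)
    (hle : ∀ cpl, IsCoupling μ ν cpl → ∫⁻ z, c z ∂cpl₀ ≤ ∫⁻ z, c z ∂cpl) :
    (⨅ (cpl : Measure (X × Y)) (_ : IsCoupling μ₀ ν cpl), ∫⁻ z, c z ∂cpl) ≤
      ⨅ (cpl : Measure (X × Y)) (_ : IsCoupling μ ν cpl), ∫⁻ z, c z ∂cpl :=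
  le_iInf₂ fun cpl hcpl => (iInf₂_le cpl₀ h₀).trans (hle cpl hcpl)

end Coupling

theorem isClosed_setOf_forall_le_norm_sub {E : Type*} [SeminormedAddCommGroup E] (d : E → ℝ) :
    IsClosed {u : E | ∀ y, d y ≤ ‖u - y‖} := by
  simp only [Set.ofPred_forall]
  exact isClosed_iInter fun y => isClosed_le continuous_const (continuous_id.sub continuous_const).norm

theorem stmt_2_general {m n : ℕ} (Θ : Set (EuclideanSpace ℝ (Fin m)))
    (G : EuclideanSpace ℝ (Fin m) → EuclideanSpace ℝ (Fin n)) (hG : Continuous G)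
    (p : ℝ) (hp : 1 ≤ p)
    (F : EuclideanSpace ℝ (Fin n) → EuclideanSpace ℝ (Fin m))
    (hF : Measurable F)
    (hnearest : ∀ x ∈ Θ, ∀ y, ‖G (F y) - y‖ ≤ ‖G x - y‖)
    (ρy : Measure (EuclideanSpace ℝ (Fin n))) :
    (∀ ρ : Measure (EuclideanSpace ℝ (Fin m)), IsProbabilityMeasure ρ → ρ Θᶜ = 0 →
      ∀ cpl : Measure (EuclideanSpace ℝ (Fin n) × EuclideanSpace ℝ (Fin n)),
        IsCoupling (ρ.map G) ρy cpl →
        ∫⁻ y, ENNReal.ofReal (‖G (F y) - y‖ ^ p) ∂ρy ≤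
          ∫⁻ z, ENNReal.ofReal (‖z.1 - z.2‖ ^ p) ∂cpl) ∧
    (IsCoupling ((ρy.map F).map G) ρy (ρy.map (fun y => (G (F y), y))) ∧
      ∫⁻ z, ENNReal.ofReal (‖z.1 - z.2‖ ^ p) ∂(ρy.map (fun y => (G (F y), y))) =
        ∫⁻ y, ENNReal.ofReal (‖G (F y) - y‖ ^ p) ∂ρy) ∧
    (∀ ρ : Measure (EuclideanSpace ℝ (Fin m)), IsProbabilityMeasure ρ → ρ Θᶜ = 0 →
      (⨅ (cpl : Measure (EuclideanSpace ℝ (Fin n) × EuclideanSpace ℝ (Fin n)))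
          (_ : IsCoupling ((ρy.map F).map G) ρy cpl),
          ∫⁻ z, ENNReal.ofReal (‖z.1 - z.2‖ ^ p) ∂cpl) ≤
        ⨅ (cpl : Measure (EuclideanSpace ℝ (Fin n) × EuclideanSpace ℝ (Fin n)))
          (_ : IsCoupling (ρ.map G) ρy cpl),
          ∫⁻ z, ENNReal.ofReal (‖z.1 - z.2‖ ^ p) ∂cpl) := by
  have hGF : Measurable (G ∘ F) := hG.measurable.comp hF
  set S := {u | ∀ y, ‖G (F y) - y‖ ≤ ‖u - y‖}
  have hS : MeasurableSet S := (isClosed_setOf_forall_le_norm_sub _).measurableSet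
  have lower_bound : ∀ ρ : Measure (EuclideanSpace ℝ (Fin m)), IsProbabilityMeasure ρ →
      ρ Θᶜ = 0 → ∀ cpl, IsCoupling (ρ.map G) ρy cpl →
        ∫⁻ y, ENNReal.ofReal (‖G (F y) - y‖ ^ p) ∂ρy ≤
          ∫⁻ z, ENNReal.ofReal (‖z.1 - z.2‖ ^ p) ∂cpl := by
    intro ρ _ hρΘ cpl hcpl
    have hGρS : ρ.map G Sᶜ = 0 := by
      rw [Measure.map_apply hG.measurable hS.compl]
      exact measure_mono_null (fun x hx hxΘ => hx (hnearest x hxΘ)) hρΘ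
    refine hcpl.lintegral_snd_le (by fun_prop) hGρS fun u hu y => ?_
    exact ENNReal.ofReal_le_ofReal (rpow_le_rpow (norm_nonneg _) (hu y) (by linarith))
  have graph_coupling : IsCoupling ((ρy.map F).map G) ρy (ρy.map fun y => (G (F y), y)) := by
    rw [Measure.map_map hG.measurable hF]
    exact isCoupling_map_graph ρy hGF
  have graph_cost : ∫⁻ z, ENNReal.ofReal (‖z.1 - z.2‖ ^ p) ∂(ρy.map fun y => (G (F y), y)) =
      ∫⁻ y, ENNReal.ofReal (‖G (F y) - y‖ ^ p) ∂ρy :=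
    lintegral_map (by fun_prop) (hGF.prodMk measurable_id)
  refine ⟨lower_bound, ⟨graph_coupling, graph_cost⟩, fun ρ hρ hρΘ => ?_⟩
  exact iInf_lintegral_isCoupling_mono graph_coupling fun cpl hcpl =>
    graph_cost.trans_le (lower_bound ρ hρ hρΘ cpl hcpl)

/-- Let `Θ ⊆ ℝᵐ` be compact, `G` continuous, `p ≥ 1`, and `F` a
measurable selection of nearest points: `‖G (F y) - y‖ ≤ ‖G x - y‖` for all `x ∈ Θ`, `y`.
Then (i) for every probability measure `ρ` on `Θ` and coupling `cpl ∈ Γ(G_#ρ, ρy)`,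
`∫‖u - v‖^p dcpl ≥ ∫‖G(F y) - y‖^p dρy`; (ii) `((G∘F) × id)_# ρy` is a coupling of
`G_#(F_#ρy)` and `ρy` with cost `∫‖G(F y) - y‖^p dρy`. Consequently `F_#ρy` minimizes
the `p`-Wasserstein cost to `ρy` among pushforwards. -/
theorem stmt_2 {m n : ℕ} (Θ : Set (EuclideanSpace ℝ (Fin m))) (hΘ : IsCompact Θ)
    (G : EuclideanSpace ℝ (Fin m) → EuclideanSpace ℝ (Fin n)) (hG : Continuous G)
    (p : ℝ) (hp : 1 ≤ p)
    (F : EuclideanSpace ℝ (Fin n) → EuclideanSpace ℝ (Fin m))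
    (hF : Measurable F) (hFΘ : ∀ y, F y ∈ Θ)
    (hnearest : ∀ x ∈ Θ, ∀ y, ‖G (F y) - y‖ ≤ ‖G x - y‖)
    (ρy : Measure (EuclideanSpace ℝ (Fin n))) [IsProbabilityMeasure ρy] :
    (∀ ρ : Measure (EuclideanSpace ℝ (Fin m)), IsProbabilityMeasure ρ → ρ Θᶜ = 0 →
      ∀ cpl : Measure (EuclideanSpace ℝ (Fin n) × EuclideanSpace ℝ (Fin n)),
        IsCoupling (ρ.map G) ρy cpl →
        ∫⁻ y, ENNReal.ofReal (‖G (F y) - y‖ ^ p) ∂ρy ≤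
          ∫⁻ z, ENNReal.ofReal (‖z.1 - z.2‖ ^ p) ∂cpl) ∧
    (IsCoupling ((ρy.map F).map G) ρy (ρy.map (fun y => (G (F y), y))) ∧
      ∫⁻ z, ENNReal.ofReal (‖z.1 - z.2‖ ^ p) ∂(ρy.map (fun y => (G (F y), y))) =
        ∫⁻ y, ENNReal.ofReal (‖G (F y) - y‖ ^ p) ∂ρy) ∧
    (∀ ρ : Measure (EuclideanSpace ℝ (Fin m)), IsProbabilityMeasure ρ → ρ Θᶜ = 0 →
      (⨅ (cpl : Measure (EuclideanSpace ℝ (Fin n) × EuclideanSpace ℝ (Fin n)))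
          (_ : IsCoupling ((ρy.map F).map G) ρy cpl),
          ∫⁻ z, ENNReal.ofReal (‖z.1 - z.2‖ ^ p) ∂cpl) ≤
        ⨅ (cpl : Measure (EuclideanSpace ℝ (Fin n) × EuclideanSpace ℝ (Fin n)))
          (_ : IsCoupling (ρ.map G) ρy cpl),
          ∫⁻ z, ENNReal.ofReal (‖z.1 - z.2‖ ^ p) ∂cpl) :=
  stmt_2_general Θ G hG p hp F hF hnearest ρy
end

section
/- Let Θ ⊆ ℝᵐ be a Borel set with Lebesgue measure λ restricted to Θ, and let G : Θ → ℝⁿ be measurable. Let ρ = f·λ and ρ' = h·λ be two probability measures on Θ with densities f, h with respect to λ, such that: (i) f = g ∘ G λ-a.e. for some measurable g : ℝⁿ → [0,∞) (so f is constant on the level sets of G); (ii) G_# ρ' = G_# ρ; (iii) ρ' ≪ ρ (equivalently h = 0 λ-a.e. on {f = 0}); and (iv) f·log f and h·log h are λ-integrable. Then ∫ f log f dλ ≤ ∫ h log h dλ. That is, among all probability densities in the feasible set {ρ_x : G_#ρ_x = ρ_y}, a density that is constant on the level sets of G minimizes the entropy ∫ ρ_x log ρ_x dx. -/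
open MeasureTheory Real
open scoped ENNReal NNReal

/-- Let `Θ ⊆ ℝᵐ` be Borel with Lebesgue measure `λΘ = volume.restrict Θ`,
`G : Θ → ℝⁿ` measurable, and let `ρ = f·λΘ`, `ρ' = h·λΘ` be probability measures with
densities `f`, `h` such that: (i) `f = g ∘ G` a.e. for some measurable `g ≥ 0`;
(ii) `G_#ρ' = G_#ρ`; (iii) `ρ' ≪ ρ` (i.e. `h = 0` a.e. on `{f = 0}`); (iv) `f log f`
and `h log h` are integrable. Then `∫ f log f ≤ ∫ h log h`: a density constant on the
level sets of `G` minimizes the entropy over the feasible set. -/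
theorem stmt_3 {m n : ℕ} (Θ : Set (EuclideanSpace ℝ (Fin m))) (hΘ : MeasurableSet Θ)
    (G : EuclideanSpace ℝ (Fin m) → EuclideanSpace ℝ (Fin n)) (hG : Measurable G)
    (f h : EuclideanSpace ℝ (Fin m) → ℝ)
    (hf : Measurable f) (hh : Measurable h)
    (hf0 : ∀ x, 0 ≤ f x) (hh0 : ∀ x, 0 ≤ h x)
    (hρ : IsProbabilityMeasure
      ((volume.restrict Θ).withDensity fun x => ENNReal.ofReal (f x)))
    (hρ' : IsProbabilityMeasure
      ((volume.restrict Θ).withDensity fun x => ENNReal.ofReal (h x)))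
    (g : EuclideanSpace ℝ (Fin n) → ℝ) (hgmeas : Measurable g) (hg0 : ∀ y, 0 ≤ g y)
    (hlevel : ∀ᵐ x ∂(volume.restrict Θ), f x = g (G x))
    (hpush : ((volume.restrict Θ).withDensity fun x => ENNReal.ofReal (h x)).map G =
      ((volume.restrict Θ).withDensity fun x => ENNReal.ofReal (f x)).map G)
    (habs : ∀ᵐ x ∂(volume.restrict Θ), f x = 0 → h x = 0)
    (hfint : Integrable (fun x => f x * Real.log (f x)) (volume.restrict Θ))
    (hhint : Integrable (fun x => h x * Real.log (h x)) (volume.restrict Θ)) :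
    ∫ x, f x * Real.log (f x) ∂(volume.restrict Θ) ≤
      ∫ x, h x * Real.log (h x) ∂(volume.restrict Θ) := by
  set μ := volume.restrict Θ with hμ
  set ρ := μ.withDensity fun x => ENNReal.ofReal (f x) with hρdef
  set ρ' := μ.withDensity fun x => ENNReal.ofReal (h x) with hρ'def
  -- total masses
  have hlintf : ∫⁻ x, ENNReal.ofReal (f x) ∂μ = 1 := by
    have := hρ.measure_univ
    rwa [hρdef, withDensity_apply _ MeasurableSet.univ, Measure.restrict_univ] at this
  have hlinth : ∫⁻ x, ENNReal.ofReal (h x) ∂μ = 1 := by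
    have := hρ'.measure_univ
    rwa [hρ'def, withDensity_apply _ MeasurableSet.univ, Measure.restrict_univ] at this
  -- f and h are integrable with integral 1
  have hfInt : Integrable f μ := by
    refine ⟨hf.aestronglyMeasurable, ?_⟩
    rw [hasFiniteIntegral_iff_norm]
    simp_rw [fun x => abs_of_nonneg (hf0 x) ▸ (Real.norm_eq_abs (f x))]
    rw [hlintf]; exact ENNReal.one_lt_top
  have hhInt : Integrable h μ := by
    refine ⟨hh.aestronglyMeasurable, ?_⟩
    rw [hasFiniteIntegral_iff_norm]
    simp_rw [fun x => abs_of_nonneg (hh0 x) ▸ (Real.norm_eq_abs (h x))]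
    rw [hlinth]; exact ENNReal.one_lt_top
  have hintf1 : ∫ x, f x ∂μ = 1 := by
    rw [integral_eq_lintegral_of_nonneg_ae (Filter.Eventually.of_forall hf0)
      hf.aestronglyMeasurable, hlintf, ENNReal.toReal_one]
  have hinth1 : ∫ x, h x ∂μ = 1 := by
    rw [integral_eq_lintegral_of_nonneg_ae (Filter.Eventually.of_forall hh0)
      hh.aestronglyMeasurable, hlinth, ENNReal.toReal_one]
  -- rewrite densities with ℝ≥0 valued functions
  have hfd : (fun x => ENNReal.ofReal (f x)) = fun x => ((f x).toNNReal : ℝ≥0∞) := rfl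
  have hhd : (fun x => ENNReal.ofReal (h x)) = fun x => ((h x).toNNReal : ℝ≥0∞) := rfl
  -- ∫ f log f = ∫ log g ∂(G_#ρ)
  have hmap_f : ∫ x, f x * Real.log (f x) ∂μ = ∫ y, Real.log (g y) ∂(ρ.map G) := by
    rw [integral_map hG.aemeasurable
      ((hgmeas.log.aestronglyMeasurable))]
    rw [hρdef, hfd, integral_withDensity_eq_integral_smul hf.real_toNNReal]
    refine integral_congr_ae ?_
    filter_upwards [hlevel] with x hx
    rw [← hx, NNReal.smul_def, Real.coe_toNNReal _ (hf0 x), smul_eq_mul]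
  -- ∫ h log f = ∫ log g ∂(G_#ρ') = ∫ log g ∂(G_#ρ) = ∫ f log f
  have hmap_h : ∫ x, h x * Real.log (f x) ∂μ = ∫ y, Real.log (g y) ∂(ρ'.map G) := by
    rw [integral_map hG.aemeasurable ((hgmeas.log.aestronglyMeasurable))]
    rw [hρ'def, hhd, integral_withDensity_eq_integral_smul hh.real_toNNReal]
    refine integral_congr_ae ?_
    filter_upwards [hlevel] with x hx
    rw [hx, NNReal.smul_def, Real.coe_toNNReal _ (hh0 x), smul_eq_mul]
  have hkey : ∫ x, h x * Real.log (f x) ∂μ = ∫ x, f x * Real.log (f x) ∂μ := by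
    rw [hmap_h, hmap_f, hpush]
  -- integrability of h log f
  have hIlogf : Integrable (fun x => h x * Real.log (f x)) μ := by
    have h1 : Integrable (fun x => f x * Real.log (g (G x))) μ := by
      refine hfint.congr ?_
      filter_upwards [hlevel] with x hx
      rw [hx]
    have h2 : Integrable (fun y => Real.log (g y)) (ρ.map G) := by
      rw [integrable_map_measure hgmeas.log.aestronglyMeasurable hG.aemeasurable]
      rw [hρdef, hfd]
      rw [integrable_withDensity_iff_integrable_smul hf.real_toNNReal]
      refine h1.congr (Filter.Eventually.of_forall fun x => ?_)
      simp [NNReal.smul_def, Real.coe_toNNReal _ (hf0 x), mul_comm]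
    have h3 : Integrable (fun y => Real.log (g y)) (ρ'.map G) := by rwa [hpush]
    rw [integrable_map_measure hgmeas.log.aestronglyMeasurable hG.aemeasurable] at h3
    rw [hρ'def, hhd, integrable_withDensity_iff_integrable_smul hh.real_toNNReal] at h3
    have h4 : Integrable (fun x => h x * Real.log (g (G x))) μ := by
      refine h3.congr (Filter.Eventually.of_forall fun x => ?_)
      simp [NNReal.smul_def, Real.coe_toNNReal _ (hh0 x), mul_comm]
    refine h4.congr ?_
    filter_upwards [hlevel] with x hx
    rw [hx]
  -- pointwise Gibbs inequality
  have hptwise : ∀ᵐ x ∂μ,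
      h x * Real.log (f x) - h x * Real.log (h x) ≤ f x - h x := by
    filter_upwards [habs] with x hx
    rcases eq_or_lt_of_le (hh0 x) with h0 | hpos
    · rw [← h0]; simp [hf0 x]
    · have hfpos : 0 < f x := by
        rcases eq_or_lt_of_le (hf0 x) with h0' | h0'
        · exact absurd (hx h0'.symm) hpos.ne'
        · exact h0'
      have hlog : Real.log (f x / h x) ≤ f x / h x - 1 :=
        Real.log_le_sub_one_of_pos (div_pos hfpos hpos)
      rw [Real.log_div (ne_of_gt hfpos) (ne_of_gt hpos)] at hlog
      have := mul_le_mul_of_nonneg_left hlog (le_of_lt hpos)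
      calc h x * Real.log (f x) - h x * Real.log (h x)
          = h x * (Real.log (f x) - Real.log (h x)) := by ring
        _ ≤ h x * (f x / h x - 1) := this
        _ = f x - h x := by field_simp
  -- integrate
  have hmono : ∫ x, (h x * Real.log (f x) - h x * Real.log (h x)) ∂μ ≤
      ∫ x, (f x - h x) ∂μ :=
    integral_mono_ae (hIlogf.sub hhint) (hfInt.sub hhInt) hptwise
  rw [integral_sub hIlogf hhint, integral_sub hfInt hhInt, hintf1, hinth1, hkey] at hmono
  linarith
end

section
/- Let Θ ⊆ ℝᵐ be a Borel set, G : Θ → ℝⁿ measurable, and ρ_y a probability measure on ℝⁿ. Suppose H : ℝⁿ → Θ is a measurable map satisfying: (i) G(H(y)) = y for ρ_y-almost every y; and (ii) ‖H(G(x))‖ ≤ ‖x‖ for every x ∈ Θ. Define ρ_x* := H_# ρ_y. Then G_# ρ_x* = ρ_y, and for every probability measure ρ on Θ with G_# ρ = ρ_y one has ∫ ‖x‖² dρ_x*(x) ≤ ∫ ‖x‖² dρ(x). That is, the pushforward of ρ_y under the pointwise least-norm solution map minimizes the second moment over the feasible set {ρ_x : G_#ρ_x = ρ_y}. -/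
open MeasureTheory Real

/-! The constraint `G_#ρ = ρy` makes `H_#ρy = (H ∘ G)_#ρ`, so the second moment of `ρx*` is
`∫ ‖H (G x)‖² dρ`, which is pointwise at most `∫ ‖x‖² dρ` because `ρ` lives on `Θ`. -/

namespace MeasureTheory.Measure

variable {X Y : Type*} [MeasurableSpace X] [MeasurableSpace Y] {G : X → Y} {H : Y → X}

theorem map_map_of_ae_leftInverse (hG : Measurable G) (hH : Measurable H) {ν : Measure Y}
    (hGH : ∀ᵐ y ∂ν, G (H y) = y) : (ν.map H).map G = ν := by
  rw [map_map hG hH, map_congr (g := id) (f := G ∘ H) hGH, map_id]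

theorem lintegral_map_map_le_of_ae_le (hG : Measurable G) (hH : Measurable H) {ρ : Measure X}
    {f : X → ENNReal} (hf : Measurable f) (hle : ∀ᵐ x ∂ρ, f (H (G x)) ≤ f x) :
    ∫⁻ x, f x ∂((ρ.map G).map H) ≤ ∫⁻ x, f x ∂ρ := by
  rw [map_map hH hG, lintegral_map hf (hH.comp hG)]
  exact lintegral_mono_ae hle

end MeasureTheory.Measure

theorem stmt_5_general {m n : ℕ} (Θ : Set (EuclideanSpace ℝ (Fin m)))
    (G : EuclideanSpace ℝ (Fin m) → EuclideanSpace ℝ (Fin n)) (hG : Measurable G)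
    (ρy : Measure (EuclideanSpace ℝ (Fin n))) [IsProbabilityMeasure ρy]
    (H : EuclideanSpace ℝ (Fin n) → EuclideanSpace ℝ (Fin m))
    (hH : Measurable H)
    (hGH : ∀ᵐ y ∂ρy, G (H y) = y)
    (hnorm : ∀ x ∈ Θ, ‖H (G x)‖ ≤ ‖x‖) :
    (ρy.map H).map G = ρy ∧
    ∀ ρ : Measure (EuclideanSpace ℝ (Fin m)), IsProbabilityMeasure ρ → ρ Θᶜ = 0 →
      ρ.map G = ρy →
      ∫⁻ x, ENNReal.ofReal (‖x‖ ^ 2) ∂(ρy.map H) ≤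
        ∫⁻ x, ENNReal.ofReal (‖x‖ ^ 2) ∂ρ := by
  refine ⟨Measure.map_map_of_ae_leftInverse hG hH hGH, fun ρ _ hρΘ hρG => ?_⟩
  subst hρG
  have hΘ_ae : ∀ᵐ x ∂ρ, x ∈ Θ := mem_ae_iff.mpr hρΘ
  refine Measure.lintegral_map_map_le_of_ae_le hG hH (by fun_prop) ?_
  filter_upwards [hΘ_ae] with x hx
  exact ENNReal.ofReal_le_ofReal (pow_le_pow_left₀ (norm_nonneg _) (hnorm x hx) 2)

/-- Let `Θ ⊆ ℝᵐ` be Borel, `G : Θ → ℝⁿ` measurable, `ρy` a probability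
measure on `ℝⁿ`, and `H : ℝⁿ → Θ` measurable with (i) `G (H y) = y` for `ρy`-a.e. `y` and
(ii) `‖H (G x)‖ ≤ ‖x‖` for all `x ∈ Θ`. Then `ρx* := H_#ρy` satisfies `G_#ρx* = ρy`, and
for every probability measure `ρ` on `Θ` with `G_#ρ = ρy`,
`∫‖x‖² dρx* ≤ ∫‖x‖² dρ`. -/
theorem stmt_5 {m n : ℕ} (Θ : Set (EuclideanSpace ℝ (Fin m))) (hΘ : MeasurableSet Θ)
    (G : EuclideanSpace ℝ (Fin m) → EuclideanSpace ℝ (Fin n)) (hG : Measurable G)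
    (ρy : Measure (EuclideanSpace ℝ (Fin n))) [IsProbabilityMeasure ρy]
    (H : EuclideanSpace ℝ (Fin n) → EuclideanSpace ℝ (Fin m))
    (hH : Measurable H) (hHΘ : ∀ y, H y ∈ Θ)
    (hGH : ∀ᵐ y ∂ρy, G (H y) = y)
    (hnorm : ∀ x ∈ Θ, ‖H (G x)‖ ≤ ‖x‖) :
    (ρy.map H).map G = ρy ∧
    ∀ ρ : Measure (EuclideanSpace ℝ (Fin m)), IsProbabilityMeasure ρ → ρ Θᶜ = 0 →
      ρ.map G = ρy →
      ∫⁻ x, ENNReal.ofReal (‖x‖ ^ 2) ∂(ρy.map H) ≤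
        ∫⁻ x, ENNReal.ofReal (‖x‖ ^ 2) ∂ρ :=
  stmt_5_general Θ G hG ρy H hH hGH hnorm
end

section
/- Let Θ be a measurable space, G : Θ → ℝⁿ measurable, M a probability measure on Θ, ρ_y a probability measure on ℝⁿ, and α > 0. Suppose ρ* is a probability measure on Θ with ρ* ≪ M and dρ*/dM = g ∘ G for some measurable g : ℝⁿ → [0,∞); suppose further that G_# ρ* ≪ ρ_y with Radon–Nikodym derivative q = d(G_#ρ*)/dρ_y, and that there is a constant c > 0 such that q(y)·g(y)^α = c for (G_# M)-almost every y. Then ρ* minimizes the regularized objective: for every probability measure ρ on Θ, KL(G_# ρ* ‖ ρ_y) + α·KL(ρ* ‖ M) ≤ KL(G_# ρ ‖ ρ_y) + α·KL(ρ ‖ M). -/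
/-!
For `ρ ≪ M`, the chain rule for log-likelihood ratios together with `log q + α log g = log c`
gives, `ρ`-almost everywhere,
`llr (G_#ρ) ρy ∘ G + α llr ρ M = llr (G_#ρ) (G_#ρ*) ∘ G + α llr ρ ρ* + log c`.
Every log-likelihood ratio of finite measures has an integrable negative part, so both sides are
integrable at the same time, and integrating yields
`KL(G_#ρ‖ρy) + α KL(ρ‖M) = KL(G_#ρ‖G_#ρ*) + α KL(ρ‖ρ*) + log c`, also when both sides are `⊤`.
For `ρ = ρ*` the right-hand side is `log c`; for any other `ρ` it is at least `log c` by Gibbs'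
inequality.
-/

open MeasureTheory Real
open scoped ENNReal Classical

/-- The Kullback–Leibler divergence `KL(P‖Q)`: equal to `∫ log (dP/dQ) dP` when `P ≪ Q`
(and the integrand is `P`-integrable), and `+∞` otherwise. -/
noncomputable def klDiv' {X : Type*} [MeasurableSpace X] (P Q : Measure X) : EReal :=
  if P ≪ Q ∧ Integrable (fun x => Real.log ((P.rnDeriv Q x).toReal)) P
  then ((∫ x, Real.log ((P.rnDeriv Q x).toReal) ∂P : ℝ) : EReal)
  else ⊤

lemma ENNReal.ne_zero_of_mul_rpow_eq_ofReal {q g : ℝ≥0∞} {α c : ℝ} (hα : 0 < α) (hc : 0 < c)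
    (h : q * g ^ α = ENNReal.ofReal c) : g ≠ 0 := by
  rintro rfl
  rw [ENNReal.zero_rpow_of_pos hα, mul_zero, eq_comm, ENNReal.ofReal_eq_zero] at h
  linarith

lemma ENNReal.log_toReal_add_mul_log_toReal_eq {q g : ℝ≥0∞} {α c : ℝ} (hα : 0 < α)
    (hc : 0 < c) (h : q * g ^ α = ENNReal.ofReal c) :
    Real.log q.toReal + α * Real.log g.toReal = Real.log c := by
  have hreal : q.toReal * g.toReal ^ α = c := by
    rw [ENNReal.toReal_rpow, ← ENNReal.toReal_mul, h, ENNReal.toReal_ofReal hc.le]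
  have hg : 0 < g.toReal := by
    refine ENNReal.toReal_nonneg.lt_of_ne fun hg => ?_
    rw [← hg, Real.zero_rpow hα.ne', mul_zero] at hreal
    linarith
  have hq : q.toReal ≠ 0 := by
    rintro hq
    rw [hq, zero_mul] at hreal
    linarith
  rw [← hreal, Real.log_mul hq (Real.rpow_pos_of_pos hg α).ne', Real.log_rpow hg]

section General

variable {X Y : Type*} [MeasurableSpace X] [MeasurableSpace Y] {μ ν κ : Measure X}

lemma integrable_negPart_llr [IsFiniteMeasure ν] [SigmaFinite μ] (hμν : μ ≪ ν) :
    Integrable (fun x => (llr μ ν x)⁻) μ := by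
  -- `(llr μ ν)⁻ ≤ exp (-llr μ ν) = dν/dμ`, which is `μ`-integrable as `ν` is finite.
  refine (Measure.integrable_toReal_rnDeriv (μ := ν) (ν := μ)).mono'
    (measurable_llr μ ν).negPart.aestronglyMeasurable ?_
  filter_upwards [exp_neg_llr hμν] with x hx
  rw [Real.norm_of_nonneg (negPart_nonneg _), ← hx]
  exact max_le (by linarith [Real.add_one_le_exp (-llr μ ν x)]) (Real.exp_pos _).le

lemma integrable_add_mul_iff_of_integrable_negPart {f h : X → ℝ} {a : ℝ} (ha : 0 < a)
    (hfm : AEStronglyMeasurable f μ) (hf : Integrable (fun x => (f x)⁻) μ)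
    (hh : Integrable (fun x => (h x)⁻) μ) :
    Integrable (fun x => f x + a * h x) μ ↔ Integrable f μ ∧ Integrable h μ := by
  refine ⟨fun hsum => ?_, fun ⟨hf', hh'⟩ => hf'.add (hh'.const_mul a)⟩
  -- `|f| ≤ |f + a h| + f⁻ + a h⁻`, as `f ≥ -f⁻` and `f = (f + a h) - a h ≤ |f + a h| + a h⁻`.
  have hf' : Integrable f μ := by
    refine (hsum.abs.add (hf.add (hh.const_mul a))).mono' hfm (ae_of_all _ fun x => ?_)
    have := mul_le_mul_of_nonneg_left (neg_le_negPart (h x)) ha.le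
    simp only [Pi.add_apply, Real.norm_eq_abs, abs_le]
    constructor <;>
      nlinarith [neg_le_negPart (f x), negPart_nonneg (f x), negPart_nonneg (h x),
        le_abs_self (f x + a * h x), neg_abs_le (f x + a * h x)]
  refine ⟨hf', ((hsum.sub hf').const_mul a⁻¹).congr (ae_of_all _ fun x => ?_)⟩
  simp only [Pi.sub_apply]
  field_simp
  ring

lemma ite_integrable_add_mul_eq [IsProbabilityMeasure μ] {f₁ f₂ h₁ h₂ : X → ℝ} {a c : ℝ}
    (ha : 0 < a) (hf₁ : AEStronglyMeasurable f₁ μ) (hh₁ : AEStronglyMeasurable h₁ μ)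
    (hf₁neg : Integrable (fun x => (f₁ x)⁻) μ) (hf₂neg : Integrable (fun x => (f₂ x)⁻) μ)
    (hh₁neg : Integrable (fun x => (h₁ x)⁻) μ) (hh₂neg : Integrable (fun x => (h₂ x)⁻) μ)
    (heq : ∀ᵐ x ∂μ, f₁ x + a * f₂ x = h₁ x + a * h₂ x + c) :
    (if Integrable f₁ μ ∧ Integrable f₂ μ
      then ((∫ x, f₁ x ∂μ + a * ∫ x, f₂ x ∂μ : ℝ) : EReal) else ⊤) =
    (if Integrable h₁ μ ∧ Integrable h₂ μ
      then ((∫ x, h₁ x ∂μ + a * ∫ x, h₂ x ∂μ : ℝ) : EReal) else ⊤) + c := by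
  have hiff : Integrable f₁ μ ∧ Integrable f₂ μ ↔ Integrable h₁ μ ∧ Integrable h₂ μ := by
    rw [← integrable_add_mul_iff_of_integrable_negPart ha hf₁ hf₁neg hf₂neg,
      ← integrable_add_mul_iff_of_integrable_negPart ha hh₁ hh₁neg hh₂neg, integrable_congr heq]
    exact integrable_add_const_iff
  by_cases hint : Integrable h₁ μ ∧ Integrable h₂ μ
  · obtain ⟨hf₁i, hf₂i⟩ := hiff.2 hint
    rw [if_pos ⟨hf₁i, hf₂i⟩, if_pos hint]
    have hf : ∫ x, f₁ x + a * f₂ x ∂μ = ∫ x, f₁ x ∂μ + a * ∫ x, f₂ x ∂μ := by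
      rw [integral_add hf₁i (hf₂i.const_mul a), integral_const_mul]
    have hh : ∫ x, h₁ x + a * h₂ x + c ∂μ = ∫ x, h₁ x ∂μ + a * ∫ x, h₂ x ∂μ + c := by
      rw [integral_add (f := fun x => h₁ x + a * h₂ x) (hint.1.add (hint.2.const_mul a))
        (integrable_const c),
        integral_add hint.1 (hint.2.const_mul a), integral_const_mul, integral_const,
        probReal_univ, one_smul]
    have := integral_congr_ae heq
    rw [hf, hh] at this
    exact_mod_cast this
  · rw [if_neg (hiff.not.2 hint), if_neg hint, EReal.top_add_coe]

lemma llr_ae_eq_llr_add_llr [SigmaFinite μ] [SigmaFinite ν] [SigmaFinite κ]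
    (hμν : μ ≪ ν) (hνκ : ν ≪ κ) :
    llr μ κ =ᵐ[μ] fun x => llr μ ν x + llr ν κ x := by
  have hμκ : μ ≪ κ := hμν.trans hνκ
  filter_upwards [hμκ.ae_le (Measure.rnDeriv_mul_rnDeriv hμν),
    Measure.rnDeriv_pos hμν, hμν.ae_le (Measure.rnDeriv_lt_top μ ν),
    hμν.ae_le (Measure.rnDeriv_pos hνκ), hμκ.ae_le (Measure.rnDeriv_lt_top ν κ)]
    with x hx h₁ h₂ h₃ h₄
  rw [llr, llr, llr, ← hx, Pi.mul_apply, ENNReal.toReal_mul,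
    Real.log_mul (ENNReal.toReal_pos h₁.ne' h₂.ne).ne' (ENNReal.toReal_pos h₃.ne' h₄.ne).ne']

lemma EReal.ite_coe_add_mul_ite_coe {p q : Prop} [Decidable p] [Decidable q] {a b α : ℝ}
    (hα : 0 < α) :
    (if p then (a : EReal) else ⊤) + α * (if q then (b : EReal) else ⊤) =
      if p ∧ q then ((a + α * b : ℝ) : EReal) else ⊤ := by
  split_ifs <;> simp_all [EReal.coe_mul_top_of_pos hα, ← EReal.coe_mul]

lemma klDiv'_eq_ite (P Q : Measure X) :
    klDiv' P Q = if P ≪ Q ∧ Integrable (llr P Q) P then ((∫ x, llr P Q x ∂P : ℝ) : EReal) else ⊤ :=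
  rfl

lemma klDiv'_map_eq_ite {G : X → Y} (hG : Measurable G) (P : Measure X) (Q : Measure Y) :
    klDiv' (P.map G) Q = if P.map G ≪ Q ∧ Integrable (fun x => llr (P.map G) Q (G x)) P
      then ((∫ x, llr (P.map G) Q (G x) ∂P : ℝ) : EReal) else ⊤ := by
  have hllr : AEStronglyMeasurable (llr (P.map G) Q) (P.map G) :=
    (stronglyMeasurable_llr _ _).aestronglyMeasurable
  rw [klDiv'_eq_ite, integrable_map_measure hllr hG.aemeasurable,
    integral_map hG.aemeasurable hllr]
  rfl

lemma klDiv'_self (P : Measure X) [SigmaFinite P] : klDiv' P P = 0 := by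
  rw [klDiv'_eq_ite, if_pos ⟨.rfl, (integrable_congr (llr_self P)).2 (integrable_zero _ _ _)⟩,
    integral_congr_ae (llr_self P)]
  simp

lemma klDiv'_nonneg (P Q : Measure X) [IsProbabilityMeasure P] [IsProbabilityMeasure Q] :
    0 ≤ klDiv' P Q := by
  rw [klDiv'_eq_ite]
  split_ifs with h
  · have := InformationTheory.integral_llr_add_sub_measure_univ_nonneg h.1 h.2
    simp only [probReal_univ, add_sub_cancel_right] at this
    exact_mod_cast this
  · exact le_top

end General

section Decomposition

variable {Θ E : Type*} [MeasurableSpace Θ] [MeasurableSpace E] {G : Θ → E}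
  {ρ M ρstar : Measure Θ} {ρy : Measure E} {h : E → ℝ} {α c : ℝ}

lemma llr_map_add_mul_llr_ae_eq [IsFiniteMeasure ρ] [SigmaFinite M] [IsFiniteMeasure ρstar]
    [SigmaFinite ρy] (hG : Measurable G) (hρM : ρ ≪ M) (hMρstar : M ≪ ρstar)
    (hρstarM : ρstar ≪ M) (hacs : ρstar.map G ≪ ρy)
    (hllr : llr ρstar M =ᵐ[M] fun x => h (G x))
    (hlog : ∀ᵐ y ∂(M.map G), llr (ρstar.map G) ρy y + α * h y = c) :
    ∀ᵐ x ∂ρ, llr (ρ.map G) ρy (G x) + α * llr ρ M x =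
      llr (ρ.map G) (ρstar.map G) (G x) + α * llr ρ ρstar x + c := by
  have hρρstar : ρ ≪ ρstar := hρM.trans hMρstar
  have hE : ∀ᵐ y ∂(ρ.map G),
      llr (ρ.map G) ρy y = llr (ρ.map G) (ρstar.map G) y + c - α * h y := by
    filter_upwards [llr_ae_eq_llr_add_llr (hρρstar.map hG) hacs, (hρM.map hG).ae_le hlog]
      with y h₁ h₂
    rw [h₁]
    linarith
  filter_upwards [ae_of_ae_map hG.aemeasurable hE, llr_ae_eq_llr_add_llr hρρstar hρstarM,
    hρM.ae_le hllr] with x h₁ h₂ h₃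
  rw [h₁, h₂, h₃]
  ring

lemma klDiv'_map_add_mul_klDiv'_eq [IsProbabilityMeasure ρ] [IsFiniteMeasure M]
    [IsFiniteMeasure ρstar] [IsFiniteMeasure ρy] (hG : Measurable G) (hα : 0 < α)
    (hMρstar : M ≪ ρstar) (hρstarM : ρstar ≪ M) (hacs : ρstar.map G ≪ ρy)
    (hllr : llr ρstar M =ᵐ[M] fun x => h (G x))
    (hlog : ∀ᵐ y ∂(M.map G), llr (ρstar.map G) ρy y + α * h y = c) :
    klDiv' (ρ.map G) ρy + α * klDiv' ρ M =
      klDiv' (ρ.map G) (ρstar.map G) + α * klDiv' ρ ρstar + c := by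
  rw [klDiv'_map_eq_ite hG, klDiv'_map_eq_ite hG, klDiv'_eq_ite ρ M, klDiv'_eq_ite ρ ρstar,
    EReal.ite_coe_add_mul_ite_coe hα, EReal.ite_coe_add_mul_ite_coe hα]
  by_cases hρM : ρ ≪ M
  swap
  · rw [if_neg (fun h => hρM h.2.1), if_neg (fun h => hρM (h.2.1.trans hρstarM)),
      EReal.top_add_coe]
  have hρρstar : ρ ≪ ρstar := hρM.trans hMρstar
  have hρGρstar : ρ.map G ≪ ρstar.map G := hρρstar.map hG
  simp only [hρM, hρρstar, hρGρstar, hρGρstar.trans hacs, true_and]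
  have hnegPart_comp {Q : Measure E} [IsFiniteMeasure Q] (hQ : ρ.map G ≪ Q) :
      Integrable (fun x => (llr (ρ.map G) Q (G x))⁻) ρ :=
    (integrable_map_measure (measurable_llr _ _).negPart.aestronglyMeasurable
      hG.aemeasurable).1 (integrable_negPart_llr hQ)
  exact ite_integrable_add_mul_eq hα
    ((measurable_llr _ _).comp hG).aestronglyMeasurable
    ((measurable_llr _ _).comp hG).aestronglyMeasurable
    (hnegPart_comp (hρGρstar.trans hacs)) (integrable_negPart_llr hρM)
    (hnegPart_comp hρGρstar) (integrable_negPart_llr hρρstar)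
    (llr_map_add_mul_llr_ae_eq hG hρM hMρstar hρstarM hacs hllr hlog)

end Decomposition

/-- Let `G : Θ → ℝⁿ` be measurable, `M` and `ρy` probability measures,
`α > 0`. Suppose `ρ*` is a probability measure with `dρ*/dM = g ∘ G`, that
`G_#ρ* ≪ ρy` with `q = d(G_#ρ*)/dρy`, and that `q(y)·g(y)^α = c > 0` for
`(G_#M)`-a.e. `y`. Then `ρ*` minimizes the regularized objective
`KL(G_#ρ‖ρy) + α·KL(ρ‖M)` over probability measures `ρ`. -/
theorem stmt_6 {Θ : Type*} [MeasurableSpace Θ] {n : ℕ}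
    (G : Θ → EuclideanSpace ℝ (Fin n)) (hG : Measurable G)
    (M : Measure Θ) [IsProbabilityMeasure M]
    (ρy : Measure (EuclideanSpace ℝ (Fin n))) [IsProbabilityMeasure ρy]
    (α : ℝ) (hα : 0 < α)
    (g : EuclideanSpace ℝ (Fin n) → ℝ≥0∞) (hg : Measurable g)
    (ρstar : Measure Θ) [IsProbabilityMeasure ρstar]
    (hρstar : ρstar = M.withDensity (fun x => g (G x)))
    (hacs : ρstar.map G ≪ ρy)
    (c : ℝ) (hc : 0 < c)
    (hconst : ∀ᵐ y ∂(M.map G),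
      (ρstar.map G).rnDeriv ρy y * g y ^ α = ENNReal.ofReal c) :
    ∀ ρ : Measure Θ, IsProbabilityMeasure ρ →
      klDiv' (ρstar.map G) ρy + (α : EReal) * klDiv' ρstar M ≤
        klDiv' (ρ.map G) ρy + (α : EReal) * klDiv' ρ M := by
  have hρstarM : ρstar ≪ M := hρstar ▸ withDensity_absolutelyContinuous M _
  have hMρstar : M ≪ ρstar := hρstar ▸ withDensity_absolutelyContinuous' (hg.comp hG).aemeasurable
    (ae_of_ae_map hG.aemeasurable
      (hconst.mono fun y hy => ENNReal.ne_zero_of_mul_rpow_eq_ofReal hα hc hy))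
  have hllr : llr ρstar M =ᵐ[M] fun x => Real.log (g (G x)).toReal := by
    rw [hρstar]
    filter_upwards [Measure.rnDeriv_withDensity M (hg.comp hG)] with x hx
    exact congrArg (fun t => Real.log t.toReal) hx
  have hlog : ∀ᵐ y ∂(M.map G),
      llr (ρstar.map G) ρy y + α * Real.log (g y).toReal = Real.log c :=
    hconst.mono fun y hy => ENNReal.log_toReal_add_mul_log_toReal_eq hα hc hy
  intro ρ hρ
  have := Measure.isProbabilityMeasure_map (μ := ρ) hG.aemeasurable
  have := Measure.isProbabilityMeasure_map (μ := ρstar) hG.aemeasurable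
  rw [klDiv'_map_add_mul_klDiv'_eq hG hα hMρstar hρstarM hacs hllr hlog,
    klDiv'_map_add_mul_klDiv'_eq hG hα hMρstar hρstarM hacs hllr hlog, klDiv'_self, klDiv'_self,
    mul_zero, add_zero, zero_add]
  exact le_add_of_nonneg_left (add_nonneg (klDiv'_nonneg _ _)
    (EReal.mul_nonneg (EReal.coe_nonneg.2 hα.le) (klDiv'_nonneg _ _)))
end

section
/- Let Θ be a measurable space, G : Θ → ℝⁿ measurable, M a probability measure on Θ, α > 0, and ρ_y a probability measure on ℝⁿ with ρ_y ≪ G_# M; write q = dρ_y/d(G_# M). Assume Z := ∫ q(G(x))^{1/(1+α)} dM(x) satisfies 0 < Z < ∞, and define the probability measure ρ* on Θ by dρ*/dM = Z⁻¹ · (q ∘ G)^{1/(1+α)}. Then for every probability measure ρ on Θ, KL(G_# ρ* ‖ ρ_y) + α·KL(ρ* ‖ M) ≤ KL(G_# ρ ‖ ρ_y) + α·KL(ρ ‖ M). That is, the explicit formula dρ*/dM ∝ (dρ_y/d(G_#M) ∘ G)^{1/(1+α)} gives the minimizer of the entropy–entropy regularized inverse problem. -/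
open MeasureTheory Real
open scoped ENNReal Classical

/-!
Write `q = dρy/d(G_#M)`, `β = 1/(1+α)`, `ν = G_#ρ` and `ν* = G_#ρ*`, which is the escort measure
`Z⁻¹ q^β · G_#M`. By the chain rule for log-likelihood ratios, `ρ`-almost everywhere
`α log dρ/dM + log dν/dρy ∘ G`
  `= α log dρ/dρ* + log dν/dν* ∘ G + (α log dν*/dG_#M + log dν*/dρy) ∘ G`,
and the last bracket is `(1+α)(β log q - log Z) - log q = -(1+α) log Z` because `(1+α)β = 1`.
Integrating against `ρ`, the objective at `ρ` is `-(1+α) log Z + α KL(ρ‖ρ*) + KL(ν‖ν*)`, which is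
at least `-(1+α) log Z` by Gibbs' inequality, and equals it at `ρ = ρ*`. The objective at `ρ*` is
finite because `t^β |log t| ≤ t/(1-β) + 1/β` makes `log q` integrable against `ν*`.
-/

section KLDivergence

variable {X : Type*} [MeasurableSpace X] {P Q : Measure X}

lemma klDiv'_of_integrable (hPQ : P ≪ Q) (hint : Integrable (llr P Q) P) :
    klDiv' P Q = ((∫ x, llr P Q x ∂P : ℝ) : EReal) :=
  if_pos ⟨hPQ, hint⟩

lemma coe_le_klDiv'_add_mul_klDiv' {Y : Type*} [MeasurableSpace Y] {P' Q' : Measure Y}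
    {c α : ℝ} (hα : 0 < α)
    (h : P ≪ Q → Integrable (llr P Q) P → P' ≪ Q' → Integrable (llr P' Q') P' →
      c ≤ ∫ x, llr P Q x ∂P + α * ∫ y, llr P' Q' y ∂P') :
    (c : EReal) ≤ klDiv' P Q + α * klDiv' P' Q' := by
  unfold klDiv'
  split_ifs with h₁ h₂ h₂
  · rw [← EReal.coe_mul, ← EReal.coe_add, EReal.coe_le_coe_iff]
    exact h h₁.1 h₁.2 h₂.1 h₂.2
  · rw [EReal.coe_mul_top_of_pos hα, EReal.coe_add_top]
    exact le_top
  · rw [← EReal.coe_mul, EReal.top_add_coe]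
    exact le_top
  · rw [EReal.coe_mul_top_of_pos hα, EReal.top_add_top]
    exact le_top

lemma llr_add_llr {R : Measure X} [SigmaFinite P] [SigmaFinite Q] [SigmaFinite R]
    (hPQ : P ≪ Q) (hQR : Q ≪ R) :
    llr P Q + llr Q R =ᵐ[P] llr P R := by
  filter_upwards [(hPQ.trans hQR).ae_le (Measure.rnDeriv_mul_rnDeriv hPQ (κ := R)),
    Measure.rnDeriv_pos hPQ, hPQ.ae_le (Measure.rnDeriv_lt_top P Q),
    hPQ.ae_le (Measure.rnDeriv_pos hQR), hPQ.ae_le (hQR.ae_le (Measure.rnDeriv_lt_top Q R))]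
    with x hmul hPQ_pos hPQ_top hQR_pos hQR_top
  rw [Pi.add_apply, llr, llr, llr, ← hmul, Pi.mul_apply, ENNReal.toReal_mul,
    log_mul (ENNReal.toReal_pos hPQ_pos.ne' hPQ_top.ne).ne'
      (ENNReal.toReal_pos hQR_pos.ne' hQR_top.ne).ne']

-- `log r ≥ 1 - r⁻¹` at `r = dP/dQ`, whose inverse is `dQ/dP`.
lemma one_sub_toReal_rnDeriv_le_llr [SigmaFinite P] [SigmaFinite Q] (hPQ : P ≪ Q) :
    ∀ᵐ x ∂P, 1 - (Q.rnDeriv P x).toReal ≤ llr P Q x := by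
  filter_upwards [Measure.inv_rnDeriv hPQ, Measure.rnDeriv_pos hPQ,
    hPQ.ae_le (Measure.rnDeriv_lt_top P Q)] with x hinv hpos htop
  rw [← hinv, Pi.inv_apply, ENNReal.toReal_inv, llr]
  exact one_sub_inv_le_log_of_pos (ENNReal.toReal_pos hpos.ne' htop.ne)

lemma integral_one_sub_toReal_rnDeriv_nonneg [IsProbabilityMeasure P] [IsProbabilityMeasure Q] :
    0 ≤ ∫ x, (1 - (Q.rnDeriv P x).toReal) ∂P := by
  rw [integral_sub (integrable_const 1) Measure.integrable_toReal_rnDeriv,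
    Measure.integral_toReal_rnDeriv']
  simp

lemma integral_mul_llr_add_llr_map_nonneg {Y : Type*} [MeasurableSpace Y] {G : X → Y}
    (hG : Measurable G) {ρ ρ' : Measure X} {ν : Measure Y} [IsProbabilityMeasure ρ]
    [IsProbabilityMeasure ρ'] [IsProbabilityMeasure ν] (hρ : ρ ≪ ρ') (hν : ρ.map G ≪ ν)
    {α : ℝ} (hα : 0 ≤ α)
    (hint : Integrable (fun x => α * llr ρ ρ' x + llr (ρ.map G) ν (G x)) ρ) :
    0 ≤ ∫ x, (α * llr ρ ρ' x + llr (ρ.map G) ν (G x)) ∂ρ := by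
  have : IsProbabilityMeasure (ρ.map G) := Measure.isProbabilityMeasure_map hG.aemeasurable
  have hb₁ : Integrable (fun x => 1 - (ρ'.rnDeriv ρ x).toReal) ρ :=
    (integrable_const 1).sub Measure.integrable_toReal_rnDeriv
  have hb₂ : Integrable (fun y => 1 - (ν.rnDeriv (ρ.map G) y).toReal) (ρ.map G) :=
    (integrable_const 1).sub Measure.integrable_toReal_rnDeriv
  have hb₂' : Integrable (fun x => 1 - (ν.rnDeriv (ρ.map G) (G x)).toReal) ρ :=
    (integrable_map_measure hb₂.aestronglyMeasurable hG.aemeasurable).mp hb₂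
  calc 0 ≤ α * ∫ x, (1 - (ρ'.rnDeriv ρ x).toReal) ∂ρ
        + ∫ y, (1 - (ν.rnDeriv (ρ.map G) y).toReal) ∂(ρ.map G) :=
        add_nonneg (mul_nonneg hα integral_one_sub_toReal_rnDeriv_nonneg)
          integral_one_sub_toReal_rnDeriv_nonneg
    _ = ∫ x, (α * (1 - (ρ'.rnDeriv ρ x).toReal)
          + (1 - (ν.rnDeriv (ρ.map G) (G x)).toReal)) ∂ρ := by
        rw [integral_add (hb₁.const_mul α) hb₂', integral_const_mul,
          integral_map hG.aemeasurable hb₂.aestronglyMeasurable]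
    _ ≤ _ := by
        refine integral_mono_ae ((hb₁.const_mul α).add hb₂') hint ?_
        filter_upwards [one_sub_toReal_rnDeriv_le_llr hρ,
          ae_of_ae_map hG.aemeasurable (one_sub_toReal_rnDeriv_le_llr hν)] with x h₁ h₂
        exact add_le_add (mul_le_mul_of_nonneg_left h₁ hα) h₂

lemma absolutelyContinuous_withDensity_of_ae_ne_zero {μ ρ : Measure X} {f : X → ℝ≥0∞}
    (hf : Measurable f) (hρμ : ρ ≪ μ) (hρf : ∀ᵐ x ∂ρ, f x ≠ 0) :
    ρ ≪ μ.withDensity f := by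
  refine Measure.AbsolutelyContinuous.mk fun s hs hs0 => ?_
  rw [withDensity_apply _ hs, lintegral_eq_zero_iff hf, Filter.EventuallyEq,
    ae_restrict_iff' hs] at hs0
  rw [measure_eq_zero_iff_ae_notMem]
  filter_upwards [hρμ.ae_le hs0, hρf] with x h0 hne hxs using hne (h0 hxs)

end KLDivergence

lemma rpow_mul_abs_log_le {β t : ℝ} (hβ₀ : 0 < β) (hβ₁ : β < 1) (ht : 0 ≤ t) :
    t ^ β * |log t| ≤ t / (1 - β) + 1 / β := by
  have h₁ : 0 ≤ t / (1 - β) := div_nonneg ht (by linarith)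
  rcases ht.eq_or_lt with rfl | ht
  · simp [zero_rpow hβ₀.ne']
    positivity
  rcases le_or_gt t 1 with ht₁ | ht₁
  · have := abs_log_mul_self_rpow_lt t β ht ht₁ hβ₀
    rw [abs_mul, abs_of_pos (rpow_pos_of_pos ht β)] at this
    linarith
  · have hlog := log_le_rpow_div ht.le (sub_pos.mpr hβ₁)
    have hsplit : t ^ β * t ^ (1 - β) = t := by rw [← rpow_add ht]; simp
    calc t ^ β * |log t| = t ^ β * log t := by rw [abs_of_pos (log_pos ht₁)]
      _ ≤ t ^ β * (t ^ (1 - β) / (1 - β)) := by gcongr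
      _ = t / (1 - β) := by rw [← mul_div_assoc, hsplit]
      _ ≤ t / (1 - β) + 1 / β := by linarith [one_div_pos.mpr hβ₀]

section Escort

variable {Y : Type*} [MeasurableSpace Y] {μ ρ : Measure Y} {β : ℝ} {Z : ℝ≥0∞}

-- For `Z = ∫ (dρ/dμ)^β dμ` this is the density of the escort distribution of `ρ` relative to
-- `μ`; `Z` is kept as a parameter.
noncomputable def escortDensity (μ ρ : Measure Y) (β : ℝ) (Z : ℝ≥0∞) (y : Y) :
    ℝ≥0∞ :=
  Z⁻¹ * ρ.rnDeriv μ y ^ β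

noncomputable def escort (μ ρ : Measure Y) (β : ℝ) (Z : ℝ≥0∞) : Measure Y :=
  μ.withDensity (escortDensity μ ρ β Z)

lemma measurable_escortDensity : Measurable (escortDensity μ ρ β Z) :=
  ((Measure.measurable_rnDeriv ρ μ).pow_const β).const_mul _

lemma escortDensity_ne_zero_iff (hβ : 0 < β) (hZ : Z ≠ ⊤) {y : Y} :
    escortDensity μ ρ β Z y ≠ 0 ↔ ρ.rnDeriv μ y ≠ 0 := by
  simp [escortDensity, hZ, ENNReal.rpow_eq_zero_iff, hβ, not_lt_of_gt hβ]

lemma ae_escort_rnDeriv_ne_zero (hβ : 0 < β) (hZ : Z ≠ ⊤) :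
    ∀ᵐ y ∂escort μ ρ β Z, ρ.rnDeriv μ y ≠ 0 :=
  (ae_withDensity_iff measurable_escortDensity).2
    (ae_of_all _ fun _ => (escortDensity_ne_zero_iff hβ hZ).1)

lemma ae_escortDensity_lt_top [SigmaFinite ρ] (hβ : 0 ≤ β) (hZ₀ : Z ≠ 0) :
    ∀ᵐ y ∂μ, escortDensity μ ρ β Z y < ⊤ := by
  filter_upwards [Measure.rnDeriv_lt_top ρ μ] with y hy
  exact ENNReal.mul_lt_top (ENNReal.inv_lt_top.mpr (pos_iff_ne_zero.mpr hZ₀))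
    (ENNReal.rpow_lt_top_of_nonneg hβ hy.ne)

lemma sigmaFinite_escort [SigmaFinite μ] [SigmaFinite ρ] (hβ : 0 ≤ β) (hZ₀ : Z ≠ 0) :
    SigmaFinite (escort μ ρ β Z) :=
  SigmaFinite.withDensity_of_ne_top ((ae_escortDensity_lt_top hβ hZ₀).mono fun _ h => h.ne)

lemma escort_absolutelyContinuous_left : escort μ ρ β Z ≪ μ :=
  withDensity_absolutelyContinuous μ _

lemma escort_absolutelyContinuous_right [SigmaFinite μ] [SigmaFinite ρ] (hρμ : ρ ≪ μ)
    (hβ : 0 < β) (hZ : Z ≠ ⊤) : escort μ ρ β Z ≪ ρ := by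
  have := absolutelyContinuous_withDensity_of_ae_ne_zero (Measure.measurable_rnDeriv ρ μ)
    escort_absolutelyContinuous_left (ae_escort_rnDeriv_ne_zero hβ hZ)
  rwa [Measure.withDensity_rnDeriv_eq ρ μ hρμ] at this

lemma llr_escort [SigmaFinite μ] [SigmaFinite ρ] (hβ : 0 < β) (hZ₀ : Z ≠ 0)
    (hZ : Z ≠ ⊤) :
    llr (escort μ ρ β Z) μ =ᵐ[escort μ ρ β Z]
      fun y => β * log (ρ.rnDeriv μ y).toReal - log Z.toReal := by
  have hac : escort μ ρ β Z ≪ μ := escort_absolutelyContinuous_left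
  filter_upwards [hac.ae_le (Measure.rnDeriv_withDensity μ measurable_escortDensity),
    hac.ae_le (Measure.rnDeriv_lt_top ρ μ), ae_escort_rnDeriv_ne_zero hβ hZ] with y hy htop hne
  have hq : 0 < (ρ.rnDeriv μ y).toReal := ENNReal.toReal_pos hne htop.ne
  have hZr : 0 < Z.toReal := ENNReal.toReal_pos hZ₀ hZ
  rw [llr, escort, hy, escortDensity, ENNReal.toReal_mul, ← ENNReal.toReal_rpow,
    ENNReal.toReal_inv, log_mul (inv_pos.mpr hZr).ne' (rpow_pos_of_pos hq β).ne', log_inv,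
    log_rpow hq]
  ring

-- The exponent `1 / (1 + α)` is exactly the one for which the `log (dρ/dμ)` terms cancel.
lemma mul_llr_escort_add_llr_escort [SigmaFinite μ] [SigmaFinite ρ] (hρμ : ρ ≪ μ) {α : ℝ}
    (hα : 0 < α) (hZ₀ : Z ≠ 0) (hZ : Z ≠ ⊤) :
    (fun y => α * llr (escort μ ρ (1 / (1 + α)) Z) μ y
        + llr (escort μ ρ (1 / (1 + α)) Z) ρ y)
      =ᵐ[escort μ ρ (1 / (1 + α)) Z] fun _ => -(1 + α) * log Z.toReal := by
  have hβ : (0 : ℝ) < 1 / (1 + α) := by positivity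
  have := sigmaFinite_escort (μ := μ) (ρ := ρ) hβ.le hZ₀
  filter_upwards [llr_escort hβ hZ₀ hZ,
    llr_add_llr (escort_absolutelyContinuous_right hρμ hβ hZ) hρμ] with y h₁ h₂
  rw [Pi.add_apply, show llr ρ μ y = log (ρ.rnDeriv μ y).toReal from rfl] at h₂
  have hβα : 1 / (1 + α) * (1 + α) = 1 := by field_simp
  linear_combination (1 + α) * h₁ + h₂ + log (ρ.rnDeriv μ y).toReal * hβα

lemma integrable_log_rnDeriv_escort [IsFiniteMeasure μ] [IsFiniteMeasure ρ] (hβ₀ : 0 < β)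
    (hβ₁ : β < 1) (hZ₀ : Z ≠ 0) :
    Integrable (fun y => log (ρ.rnDeriv μ y).toReal) (escort μ ρ β Z) := by
  rw [escort, integrable_withDensity_iff measurable_escortDensity
    (ae_escortDensity_lt_top hβ₀.le hZ₀)]
  have hbound : Integrable (fun y => (ρ.rnDeriv μ y).toReal / (1 - β) + 1 / β) μ :=
    (Measure.integrable_toReal_rnDeriv.div_const _).add (integrable_const _)
  refine Integrable.mono' (hbound.const_mul Z⁻¹.toReal)
    ((Measure.measurable_rnDeriv ρ μ).ennreal_toReal.log.mul
      measurable_escortDensity.ennreal_toReal).aestronglyMeasurable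
    (ae_of_all _ fun y => ?_)
  rw [escortDensity, ENNReal.toReal_mul, ← ENNReal.toReal_rpow, norm_mul, norm_mul,
    Real.norm_eq_abs, Real.norm_of_nonneg ENNReal.toReal_nonneg,
    Real.norm_of_nonneg (rpow_nonneg ENNReal.toReal_nonneg _), mul_left_comm, mul_comm |log _|]
  exact mul_le_mul_of_nonneg_left (rpow_mul_abs_log_le hβ₀ hβ₁ ENNReal.toReal_nonneg)
    ENNReal.toReal_nonneg

lemma klDiv'_escort_add_mul_klDiv'_escort [IsFiniteMeasure μ] [IsFiniteMeasure ρ]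
    (hρμ : ρ ≪ μ) {α : ℝ} (hα : 0 < α) (hZ₀ : Z ≠ 0) (hZ : Z ≠ ⊤)
    [IsProbabilityMeasure (escort μ ρ (1 / (1 + α)) Z)] :
    klDiv' (escort μ ρ (1 / (1 + α)) Z) ρ + α * klDiv' (escort μ ρ (1 / (1 + α)) Z) μ
      = ((-(1 + α) * log Z.toReal : ℝ) : EReal) := by
  have hβ₀ : (0 : ℝ) < 1 / (1 + α) := by positivity
  have hβ₁ : 1 / (1 + α) < 1 := by rw [div_lt_one (by positivity)]; linarith
  have hμ : Integrable (llr (escort μ ρ (1 / (1 + α)) Z) μ) (escort μ ρ (1 / (1 + α)) Z) :=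
    (integrable_congr (llr_escort hβ₀ hZ₀ hZ)).2
      (((integrable_log_rnDeriv_escort hβ₀ hβ₁ hZ₀).const_mul _).sub (integrable_const _))
  have hsum := mul_llr_escort_add_llr_escort hρμ hα hZ₀ hZ
  have hρ : Integrable (llr (escort μ ρ (1 / (1 + α)) Z) ρ) (escort μ ρ (1 / (1 + α)) Z) := by
    have := ((integrable_congr hsum).2 (integrable_const (-(1 + α) * log Z.toReal))).sub
      (hμ.const_mul α)
    exact this.congr (ae_of_all _ fun _ => by simp)
  rw [klDiv'_of_integrable (escort_absolutelyContinuous_right hρμ hβ₀ hZ) hρ,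
    klDiv'_of_integrable escort_absolutelyContinuous_left hμ, ← EReal.coe_mul,
    ← EReal.coe_add, ← integral_const_mul, add_comm, ← integral_add (hμ.const_mul α) hρ,
    integral_congr_ae hsum, integral_const, probReal_univ, one_smul]

end Escort

section Pullback

variable {X Y : Type*} [MeasurableSpace X] [MeasurableSpace Y] {G : X → Y} {M : Measure X}
  {w : Y → ℝ≥0∞}

lemma map_withDensity_comp (hG : Measurable G) (hw : Measurable w) :
    (M.withDensity (w ∘ G)).map G = (M.map G).withDensity w := by
  ext s hs
  rw [Measure.map_apply hG hs, withDensity_apply _ (hG hs), withDensity_apply _ hs,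
    setLIntegral_map hs hw hG]
  rfl

lemma llr_withDensity_comp [IsFiniteMeasure M] (hG : Measurable G) (hw : Measurable w) :
    llr (M.withDensity (w ∘ G)) M =ᵐ[M]
      fun x => llr ((M.map G).withDensity w) (M.map G) (G x) := by
  filter_upwards [Measure.rnDeriv_withDensity M (hw.comp hG),
    ae_of_ae_map hG.aemeasurable (Measure.rnDeriv_withDensity (M.map G) hw)] with x h₁ h₂
  rw [llr, llr, h₁, h₂, Function.comp_apply]

lemma klDiv'_withDensity_comp [IsFiniteMeasure M] (hG : Measurable G) (hw : Measurable w) :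
    klDiv' (M.withDensity (w ∘ G)) M = klDiv' ((M.map G).withDensity w) (M.map G) := by
  have hae : llr (M.withDensity (w ∘ G)) M =ᵐ[M.withDensity (w ∘ G)]
      fun x => llr ((M.map G).withDensity w) (M.map G) (G x) :=
    (withDensity_absolutelyContinuous M (w ∘ G)).ae_le (llr_withDensity_comp hG hw)
  have hint : Integrable (llr (M.withDensity (w ∘ G)) M) (M.withDensity (w ∘ G)) ↔
      Integrable (llr ((M.map G).withDensity w) (M.map G)) ((M.map G).withDensity w) := by
    rw [integrable_congr hae, ← map_withDensity_comp hG hw,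
      integrable_map_measure (measurable_llr _ _).aestronglyMeasurable hG.aemeasurable]
    rfl
  have hval : ∫ x, llr (M.withDensity (w ∘ G)) M x ∂(M.withDensity (w ∘ G)) =
      ∫ y, llr ((M.map G).withDensity w) (M.map G) y ∂((M.map G).withDensity w) := by
    rw [integral_congr_ae hae, ← map_withDensity_comp hG hw,
      integral_map hG.aemeasurable (measurable_llr _ _).aestronglyMeasurable]
  unfold klDiv'
  simp only [withDensity_absolutelyContinuous, true_and]
  exact if_congr hint (congrArg _ hval) rfl

end Pullback

section Minimizer

variable {X Y : Type*} [MeasurableSpace X] [MeasurableSpace Y] {G : X → Y} {M ρ : Measure X}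
  {ρy : Measure Y} {α : ℝ} {Z : ℝ≥0∞}

lemma absolutelyContinuous_withDensity_escortDensity_comp [SigmaFinite ρy] [IsFiniteMeasure M]
    (hG : Measurable G) (hac : ρy ≪ M.map G) {β : ℝ} (hβ : 0 < β) (hZ : Z ≠ ⊤)
    (hρM : ρ ≪ M) (hρy : ρ.map G ≪ ρy) :
    ρ ≪ M.withDensity (escortDensity (M.map G) ρy β Z ∘ G) := by
  refine absolutelyContinuous_withDensity_of_ae_ne_zero (measurable_escortDensity.comp hG) hρM ?_
  have hpos : ∀ᵐ y ∂ρ.map G, ρy.rnDeriv (M.map G) y ≠ 0 :=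
    hρy.ae_le ((Measure.rnDeriv_pos hac).mono fun _ h => h.ne')
  filter_upwards [ae_of_ae_map hG.aemeasurable hpos] with x hx
  exact (escortDensity_ne_zero_iff hβ hZ).2 hx

lemma map_withDensity_escortDensity_comp (hG : Measurable G) {β : ℝ} :
    (M.withDensity (escortDensity (M.map G) ρy β Z ∘ G)).map G = escort (M.map G) ρy β Z :=
  map_withDensity_comp hG measurable_escortDensity

lemma mul_llr_add_llr_map_ae_eq [IsFiniteMeasure M] [IsFiniteMeasure ρy] [IsFiniteMeasure ρ]
    (hG : Measurable G) (hac : ρy ≪ M.map G) (hα : 0 < α) (hZ₀ : Z ≠ 0) (hZ : Z ≠ ⊤)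
    (hρ : ρ ≪ M.withDensity (escortDensity (M.map G) ρy (1 / (1 + α)) Z ∘ G)) :
    (fun x => α * llr ρ M x + llr (ρ.map G) ρy (G x)) =ᵐ[ρ] fun x =>
      α * llr ρ (M.withDensity (escortDensity (M.map G) ρy (1 / (1 + α)) Z ∘ G)) x
        + llr (ρ.map G) (escort (M.map G) ρy (1 / (1 + α)) Z) (G x)
        - (1 + α) * log Z.toReal := by
  have hβ : (0 : ℝ) < 1 / (1 + α) := by positivity
  have hw := measurable_escortDensity (μ := M.map G) (ρ := ρy) (β := 1 / (1 + α)) (Z := Z)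
  have := sigmaFinite_escort (μ := M.map G) (ρ := ρy) hβ.le hZ₀
  have : SigmaFinite (M.withDensity (escortDensity (M.map G) ρy (1 / (1 + α)) Z ∘ G)) :=
    SigmaFinite.withDensity_of_ne_top (ae_of_ae_map hG.aemeasurable
      ((ae_escortDensity_lt_top hβ.le hZ₀).mono fun _ h => h.ne))
  have hν : ρ.map G ≪ escort (M.map G) ρy (1 / (1 + α)) Z :=
    map_withDensity_escortDensity_comp hG ▸ hρ.map hG
  have hρM : ρ ≪ M := hρ.trans (withDensity_absolutelyContinuous _ _)
  filter_upwards [llr_add_llr hρ (withDensity_absolutelyContinuous _ _),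
    hρM.ae_le (llr_withDensity_comp hG hw),
    ae_of_ae_map hG.aemeasurable (llr_add_llr hν (escort_absolutelyContinuous_right hac hβ hZ)),
    ae_of_ae_map hG.aemeasurable (hν.ae_le (mul_llr_escort_add_llr_escort hac hα hZ₀ hZ))]
    with x h₁ h₂ h₃ h₄
  rw [Pi.add_apply] at h₁ h₃
  rw [← escort] at h₂
  rw [← h₁, ← h₃, h₂]
  linear_combination h₄

lemma neg_mul_log_le_integral_llr_map_add_mul_integral_llr [IsProbabilityMeasure M]
    [IsProbabilityMeasure ρy] [IsProbabilityMeasure ρ] (hG : Measurable G) (hac : ρy ≪ M.map G)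
    (hα : 0 < α) (hZ₀ : Z ≠ 0) (hZ : Z ≠ ⊤)
    [IsProbabilityMeasure (M.withDensity (escortDensity (M.map G) ρy (1 / (1 + α)) Z ∘ G))]
    (hρM : ρ ≪ M) (hνρy : ρ.map G ≪ ρy) (hρint : Integrable (llr ρ M) ρ)
    (hνint : Integrable (llr (ρ.map G) ρy) (ρ.map G)) :
    -(1 + α) * log Z.toReal ≤
      ∫ y, llr (ρ.map G) ρy y ∂(ρ.map G) + α * ∫ x, llr ρ M x ∂ρ := by
  have hβ : (0 : ℝ) < 1 / (1 + α) := by positivity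
  have hmap := map_withDensity_escortDensity_comp (M := M) (ρy := ρy) (Z := Z) hG
    (β := 1 / (1 + α))
  have : IsProbabilityMeasure (escort (M.map G) ρy (1 / (1 + α)) Z) :=
    hmap ▸ Measure.isProbabilityMeasure_map hG.aemeasurable
  have hρ := absolutelyContinuous_withDensity_escortDensity_comp hG hac hβ hZ hρM hνρy
  have hν : ρ.map G ≪ escort (M.map G) ρy (1 / (1 + α)) Z := hmap ▸ hρ.map hG
  have hid := mul_llr_add_llr_map_ae_eq hG hac hα hZ₀ hZ hρ
  have hνint' : Integrable (fun x => llr (ρ.map G) ρy (G x)) ρ :=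
    (integrable_map_measure (measurable_llr _ _).aestronglyMeasurable hG.aemeasurable).mp hνint
  have hgibbs : Integrable (fun x =>
      α * llr ρ (M.withDensity (escortDensity (M.map G) ρy (1 / (1 + α)) Z ∘ G)) x
        + llr (ρ.map G) (escort (M.map G) ρy (1 / (1 + α)) Z) (G x)) ρ := by
    have := (integrable_congr hid).mp ((hρint.const_mul α).add hνint')
    simpa only [sub_eq_add_neg, integrable_add_const_iff] using this
  calc -(1 + α) * log Z.toReal
      ≤ ∫ x, (α * llr ρ (M.withDensity (escortDensity (M.map G) ρy (1 / (1 + α)) Z ∘ G)) x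
          + llr (ρ.map G) (escort (M.map G) ρy (1 / (1 + α)) Z) (G x)
          - (1 + α) * log Z.toReal) ∂ρ := by
        rw [integral_sub hgibbs (integrable_const _), integral_const, probReal_univ, one_smul]
        linarith [integral_mul_llr_add_llr_map_nonneg hG hρ hν hα.le hgibbs]
    _ = ∫ x, (α * llr ρ M x + llr (ρ.map G) ρy (G x)) ∂ρ := (integral_congr_ae hid).symm
    _ = _ := by
        rw [integral_add (hρint.const_mul α) hνint', integral_const_mul, add_comm,
          integral_map hG.aemeasurable (measurable_llr _ _).aestronglyMeasurable]

end Minimizer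

/-- Let `G : Θ → ℝⁿ` be measurable, `M` a probability measure, `α > 0`,
and `ρy` a probability measure with `ρy ≪ G_#M`; write `q = dρy/d(G_#M)` and
`Z = ∫ (q ∘ G)^{1/(1+α)} dM` with `0 < Z < ∞`. Then the measure `ρ*` with
`dρ*/dM = Z⁻¹·(q ∘ G)^{1/(1+α)}` is a probability measure minimizing
`KL(G_#ρ‖ρy) + α·KL(ρ‖M)` over probability measures `ρ`. -/
theorem stmt_7 {Θ : Type*} [MeasurableSpace Θ] {n : ℕ}
    (G : Θ → EuclideanSpace ℝ (Fin n)) (hG : Measurable G)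
    (M : Measure Θ) [IsProbabilityMeasure M]
    (α : ℝ) (hα : 0 < α)
    (ρy : Measure (EuclideanSpace ℝ (Fin n))) [IsProbabilityMeasure ρy]
    (hac : ρy ≪ M.map G)
    (Z : ℝ≥0∞)
    (hZ : Z = ∫⁻ x, (ρy.rnDeriv (M.map G) (G x)) ^ (1 / (1 + α)) ∂M)
    (hZpos : 0 < Z) (hZfin : Z < ⊤)
    (ρstar : Measure Θ)
    (hρstar : ρstar = M.withDensity
      (fun x => Z⁻¹ * (ρy.rnDeriv (M.map G) (G x)) ^ (1 / (1 + α)))) :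
    IsProbabilityMeasure ρstar ∧
    ∀ ρ : Measure Θ, IsProbabilityMeasure ρ →
      klDiv' (ρstar.map G) ρy + (α : EReal) * klDiv' ρstar M ≤
        klDiv' (ρ.map G) ρy + (α : EReal) * klDiv' ρ M := by
  have hZ₀ : Z ≠ 0 := hZpos.ne'
  have hZtop : Z ≠ ⊤ := hZfin.ne
  have hprob : IsProbabilityMeasure ρstar := by
    constructor
    rw [hρstar, withDensity_apply _ MeasurableSet.univ, Measure.restrict_univ,
      lintegral_const_mul' _ _ (ENNReal.inv_ne_top.mpr hZ₀), ← hZ,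
      ENNReal.inv_mul_cancel hZ₀ hZtop]
  replace hρstar : ρstar = M.withDensity (escortDensity (M.map G) ρy (1 / (1 + α)) Z ∘ G) :=
    hρstar
  subst hρstar
  have : IsProbabilityMeasure (escort (M.map G) ρy (1 / (1 + α)) Z) :=
    map_withDensity_escortDensity_comp hG ▸ Measure.isProbabilityMeasure_map hG.aemeasurable
  refine ⟨hprob, fun ρ _ => ?_⟩
  rw [map_withDensity_escortDensity_comp hG, klDiv'_withDensity_comp hG measurable_escortDensity,
    ← escort, klDiv'_escort_add_mul_klDiv'_escort hac hα hZ₀ hZtop]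
  exact coe_le_klDiv'_add_mul_klDiv' hα fun hνρy hνint hρM hρint =>
    neg_mul_log_le_integral_llr_map_add_mul_integral_llr hG hac hα hZ₀ hZtop hρM hνρy hρint
      hνint
end

section
/- Let Θ ⊆ ℝᵐ be a Borel set, G : Θ → ℝⁿ measurable, α > 0, ρ a probability measure on Θ with finite second moment, and ρ_y a probability measure on ℝⁿ with finite second moment. Define G̃ : Θ → ℝⁿ × ℝᵐ by G̃(x) = (G(x), √α · x), and let ρ̄_y = ρ_y ⊗ δ₀ be the product of ρ_y with the Dirac measure at 0 ∈ ℝᵐ. Then the infimum of ∫ ‖u − v‖² dπ(u,v) over couplings π ∈ Γ(G̃_# ρ, ρ̄_y) equals [the infimum of ∫ ‖a − b‖² dγ(a,b) over couplings γ ∈ Γ(G_# ρ, ρ_y)] + α ∫ ‖x‖² dρ(x). In other words, W₂²(G̃_#ρ, ρ_y ⊗ δ₀) = W₂²(G_#ρ, ρ_y) + α ∫‖x‖² dρ. -/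
/-!
A coupling of `G̃_#ρ` with `ρ_y ⊗ δ₀` has its last coordinate equal to `0` almost surely, so the
`ℝᵐ`-part of its cost is `∫ ‖√α x‖² dρ` whatever the coupling; projecting away the `ℝᵐ`-parts
leaves a coupling of `G_#ρ` with `ρ_y` carrying the rest of the cost. Conversely, disintegrating a
coupling `γ` of `G_#ρ` with `ρ_y` along its first marginal and gluing it to `ρ` along `G` lifts
`γ` to a coupling of `G̃_#ρ` with `ρ_y ⊗ δ₀` of cost `cost γ + α ∫ ‖x‖² dρ`.
-/

open MeasureTheory ProbabilityTheory Real
open scoped ENNReal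

noncomputable def transportCost {X Y : Type*} [MeasurableSpace X] [MeasurableSpace Y]
    (c : X × Y → ℝ≥0∞) (μ : Measure X) (ν : Measure Y) : ℝ≥0∞ :=
  ⨅ (γ : Measure (X × Y)) (_ : IsCoupling μ ν γ), ∫⁻ w, c w ∂γ

namespace IsCoupling

variable {X Y : Type*} [MeasurableSpace X] [MeasurableSpace Y]
  {μ : Measure X} {ν : Measure Y} {γ : Measure (X × Y)}

lemma map {X' Y' : Type*} [MeasurableSpace X'] [MeasurableSpace Y'] {f : X → X'} {g : Y → Y'}
    (hf : Measurable f) (hg : Measurable g) (h : IsCoupling μ ν γ) :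
    IsCoupling (μ.map f) (ν.map g) (γ.map (Prod.map f g)) := by
  constructor
  · rw [Measure.map_map measurable_fst (hf.prodMap hg), ← h.1, Measure.map_map hf measurable_fst]
    rfl
  · rw [Measure.map_map measurable_snd (hf.prodMap hg), ← h.2, Measure.map_map hg measurable_snd]
    rfl

lemma isFiniteMeasure [IsFiniteMeasure μ] (h : IsCoupling μ ν γ) : IsFiniteMeasure γ :=
  ⟨by rw [← Set.preimage_univ (f := Prod.fst), ← Measure.map_apply measurable_fst .univ, h.1]
      exact measure_lt_top μ _⟩

lemma lintegral_fst (h : IsCoupling μ ν γ) {f : X → ℝ≥0∞} (hf : Measurable f) :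
    ∫⁻ w, f w.1 ∂γ = ∫⁻ x, f x ∂μ := by
  rw [← h.1, lintegral_map hf measurable_fst]

lemma ae_snd_snd_eq {Z : Type*} [MeasurableSpace Z] [MeasurableSingletonClass Z] [SFinite ν]
    {z₀ : Z} {γ : Measure (X × Y × Z)} (h : IsCoupling μ (ν.prod (Measure.dirac z₀)) γ) :
    ∀ᵐ w ∂γ, w.2.2 = z₀ := by
  have hν : ∀ᵐ p ∂(ν.prod (Measure.dirac z₀)), p.2 = z₀ := by
    rw [Measure.prod_dirac]
    exact (ae_map_iff (by fun_prop) (measurable_snd (measurableSet_singleton z₀))).2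
      (ae_of_all _ fun _ => rfl)
  rw [← h.2] at hν
  exact ae_of_ae_map measurable_snd.aemeasurable hν

end IsCoupling

lemma Measure.map_prodMap_compProd_comap {Θ Y Y' : Type*} [MeasurableSpace Θ]
    [MeasurableSpace Y] [MeasurableSpace Y'] (ρ : Measure Θ) [SFinite ρ] (κ : Kernel Y Y')
    [IsSFiniteKernel κ] {G : Θ → Y} (hG : Measurable G) :
    (ρ ⊗ₘ κ.comap G hG).map (Prod.map G id) = ρ.map G ⊗ₘ κ := by
  ext s hs
  rw [Measure.map_apply (hG.prodMap measurable_id) hs,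
    Measure.compProd_apply (hG.prodMap measurable_id hs), Measure.compProd_apply hs,
    lintegral_map (κ.measurable_kernel_prodMk_left hs) hG]
  rfl

lemma exists_map_fst_eq_map_prodMap_eq {Θ Y Y' : Type*} [MeasurableSpace Θ]
    [MeasurableSpace Y] [MeasurableSpace Y'] [StandardBorelSpace Y'] [Nonempty Y']
    (ρ : Measure Θ) [SFinite ρ] {G : Θ → Y} (hG : Measurable G)
    (γ : Measure (Y × Y')) [IsFiniteMeasure γ] (hγ : γ.map Prod.fst = ρ.map G) :
    ∃ μ : Measure (Θ × Y'), μ.map Prod.fst = ρ ∧ μ.map (Prod.map G id) = γ :=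
  ⟨ρ ⊗ₘ γ.condKernel.comap G hG, Measure.fst_compProd _ _, by
    rw [Measure.map_prodMap_compProd_comap, ← hγ]
    exact γ.disintegrate γ.condKernel⟩

section ProdDirac

variable {Θ Y Z : Type*} [MeasurableSpace Θ] [MeasurableSpace Y] [MeasurableSpace Z]
  {ρ : Measure Θ} {ν : Measure Y} [SFinite ν] {G : Θ → Y} {H : Θ → Z} {z₀ : Z}
  {c : Y × Y → ℝ≥0∞} {d : Z × Z → ℝ≥0∞}

lemma IsCoupling.lintegral_add_eq_of_prod_dirac [MeasurableSingletonClass Z]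
    (hG : Measurable G) (hH : Measurable H) (hc : Measurable c) (hd : Measurable d)
    {cpl : Measure ((Y × Z) × Y × Z)}
    (h : IsCoupling (ρ.map fun x => (G x, H x)) (ν.prod (Measure.dirac z₀)) cpl) :
    ∫⁻ w, c (w.1.1, w.2.1) + d (w.1.2, w.2.2) ∂cpl =
      ∫⁻ w, c w ∂(cpl.map (Prod.map Prod.fst Prod.fst)) + ∫⁻ x, d (H x, z₀) ∂ρ := by
  rw [lintegral_add_left (by fun_prop), lintegral_map hc (by fun_prop)]
  congr 1
  calc ∫⁻ w, d (w.1.2, w.2.2) ∂cpl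
      = ∫⁻ w, d (w.1.2, z₀) ∂cpl :=
        lintegral_congr_ae (h.ae_snd_snd_eq.mono fun w hw => congrArg (fun z => d (w.1.2, z)) hw)
    _ = ∫⁻ p, d (p.2, z₀) ∂(ρ.map fun x => (G x, H x)) :=
        h.lintegral_fst (f := fun p => d (p.2, z₀)) (by fun_prop)
    _ = ∫⁻ x, d (H x, z₀) ∂ρ := lintegral_map (by fun_prop) (by fun_prop)

lemma IsCoupling.exists_prod_dirac_lintegral_add_eq [SFinite ρ] [StandardBorelSpace Y]
    [Nonempty Y] (hG : Measurable G) (hH : Measurable H) (hc : Measurable c) (hd : Measurable d)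
    {γ : Measure (Y × Y)} [IsFiniteMeasure γ] (hγ : IsCoupling (ρ.map G) ν γ) :
    ∃ cpl : Measure ((Y × Z) × Y × Z),
      IsCoupling (ρ.map fun x => (G x, H x)) (ν.prod (Measure.dirac z₀)) cpl ∧
      ∫⁻ w, c (w.1.1, w.2.1) + d (w.1.2, w.2.2) ∂cpl = ∫⁻ w, c w ∂γ + ∫⁻ x, d (H x, z₀) ∂ρ := by
  obtain ⟨μ, hμρ, hμγ⟩ := exists_map_fst_eq_map_prodMap_eq ρ hG γ hγ.1
  have hμν : μ.map Prod.snd = ν := by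
    rw [← hγ.2, ← hμγ, Measure.map_map measurable_snd (by fun_prop)]
    rfl
  have hT : Measurable fun p : Θ × Y => ((G p.1, H p.1), (p.2, z₀)) := by fun_prop
  refine ⟨μ.map fun p => ((G p.1, H p.1), (p.2, z₀)), ⟨?_, ?_⟩, ?_⟩
  · rw [Measure.map_map measurable_fst hT, ← hμρ, Measure.map_map (by fun_prop) measurable_fst]
    rfl
  · rw [Measure.map_map measurable_snd hT, Measure.prod_dirac, ← hμν,
      Measure.map_map (by fun_prop) measurable_snd]
    rfl
  · rw [lintegral_map (by fun_prop) hT, lintegral_add_left (by fun_prop), ← hμγ,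
      lintegral_map hc (by fun_prop), ← hμρ, lintegral_map (by fun_prop) measurable_fst]
    rfl

theorem transportCost_prod_dirac [IsFiniteMeasure ρ] [StandardBorelSpace Y] [Nonempty Y]
    [MeasurableSingletonClass Z] (hG : Measurable G) (hH : Measurable H) (hc : Measurable c)
    (hd : Measurable d) :
    transportCost (fun w => c (w.1.1, w.2.1) + d (w.1.2, w.2.2))
        (ρ.map fun x => (G x, H x)) (ν.prod (Measure.dirac z₀)) =
      transportCost c (ρ.map G) ν + ∫⁻ x, d (H x, z₀) ∂ρ := by
  simp only [transportCost, ENNReal.iInf_add]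
  refine le_antisymm (le_iInf₂ fun γ hγ => ?_) (le_iInf₂ fun cpl hcpl => ?_)
  · have := hγ.isFiniteMeasure
    obtain ⟨cpl, hcpl, hcost⟩ := hγ.exists_prod_dirac_lintegral_add_eq (z₀ := z₀) hG hH hc hd
    exact hcost ▸ iInf₂_le cpl hcpl
  · have hγ := hcpl.map measurable_fst measurable_fst
    rw [Measure.map_map measurable_fst (by fun_prop), Measure.map_fst_prod, measure_univ,
      one_smul] at hγ
    exact (hcpl.lintegral_add_eq_of_prod_dirac hG hH hc hd).symm ▸ iInf₂_le _ hγ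

end ProdDirac

theorem stmt_8_general {m n : ℕ}
    (G : EuclideanSpace ℝ (Fin m) → EuclideanSpace ℝ (Fin n)) (hG : Measurable G)
    (α : ℝ) (hα : 0 < α)
    (ρ : Measure (EuclideanSpace ℝ (Fin m))) [IsProbabilityMeasure ρ]
    (ρy : Measure (EuclideanSpace ℝ (Fin n))) [IsProbabilityMeasure ρy] :
    (⨅ (cpl : Measure ((EuclideanSpace ℝ (Fin n) × EuclideanSpace ℝ (Fin m)) ×
        (EuclideanSpace ℝ (Fin n) × EuclideanSpace ℝ (Fin m))))
      (_ : IsCoupling (ρ.map fun x => (G x, Real.sqrt α • x))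
        (ρy.prod (Measure.dirac (0 : EuclideanSpace ℝ (Fin m)))) cpl),
      ∫⁻ z, ENNReal.ofReal (‖z.1.1 - z.2.1‖ ^ 2 + ‖z.1.2 - z.2.2‖ ^ 2) ∂cpl) =
    (⨅ (γ : Measure (EuclideanSpace ℝ (Fin n) × EuclideanSpace ℝ (Fin n)))
      (_ : IsCoupling (ρ.map G) ρy γ),
      ∫⁻ z, ENNReal.ofReal (‖z.1 - z.2‖ ^ 2) ∂γ) +
    ∫⁻ x, ENNReal.ofReal (α * ‖x‖ ^ 2) ∂ρ := by
  have hcost : (fun z : (EuclideanSpace ℝ (Fin n) × EuclideanSpace ℝ (Fin m)) ×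
      (EuclideanSpace ℝ (Fin n) × EuclideanSpace ℝ (Fin m)) =>
        ENNReal.ofReal (‖z.1.1 - z.2.1‖ ^ 2 + ‖z.1.2 - z.2.2‖ ^ 2)) =
      fun z => ENNReal.ofReal (‖z.1.1 - z.2.1‖ ^ 2) + ENNReal.ofReal (‖z.1.2 - z.2.2‖ ^ 2) :=
    funext fun z => ENNReal.ofReal_add (by positivity) (by positivity)
  have hnorm (x : EuclideanSpace ℝ (Fin m)) : ‖Real.sqrt α • x - 0‖ ^ 2 = α * ‖x‖ ^ 2 := by
    rw [sub_zero, norm_smul, Real.norm_of_nonneg (Real.sqrt_nonneg α), mul_pow,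
      Real.sq_sqrt hα.le]
  change transportCost _ _ _ = transportCost _ _ _ + _
  rw [hcost, transportCost_prod_dirac (H := fun x => Real.sqrt α • x)
    (c := fun w => ENNReal.ofReal (‖w.1 - w.2‖ ^ 2))
    (d := fun w => ENNReal.ofReal (‖w.1 - w.2‖ ^ 2))
    hG (by fun_prop) (by fun_prop) (by fun_prop)]
  simp only [hnorm]

/-- Let `Θ ⊆ ℝᵐ` be Borel, `G : Θ → ℝⁿ` measurable, `α > 0`, `ρ` a
probability measure on `Θ` and `ρy` on `ℝⁿ`, both with finite second moments. With
`G̃ x = (G x, √α • x)` and `ρ̄y = ρy ⊗ δ₀`, the squared 2-Wasserstein cost (Euclidean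
norm on the product: `‖(a,b) - (a',b')‖² = ‖a - a'‖² + ‖b - b'‖²`) decomposes as
`W₂²(G̃_#ρ, ρy ⊗ δ₀) = W₂²(G_#ρ, ρy) + α ∫‖x‖² dρ`. -/
theorem stmt_8 {m n : ℕ} (Θ : Set (EuclideanSpace ℝ (Fin m))) (hΘ : MeasurableSet Θ)
    (G : EuclideanSpace ℝ (Fin m) → EuclideanSpace ℝ (Fin n)) (hG : Measurable G)
    (α : ℝ) (hα : 0 < α)
    (ρ : Measure (EuclideanSpace ℝ (Fin m))) [IsProbabilityMeasure ρ] (hρΘ : ρ Θᶜ = 0)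
    (hρ2 : ∫⁻ x, ENNReal.ofReal (‖x‖ ^ 2) ∂ρ < ⊤)
    (ρy : Measure (EuclideanSpace ℝ (Fin n))) [IsProbabilityMeasure ρy]
    (hρy2 : ∫⁻ y, ENNReal.ofReal (‖y‖ ^ 2) ∂ρy < ⊤) :
    (⨅ (cpl : Measure ((EuclideanSpace ℝ (Fin n) × EuclideanSpace ℝ (Fin m)) ×
        (EuclideanSpace ℝ (Fin n) × EuclideanSpace ℝ (Fin m))))
      (_ : IsCoupling (ρ.map fun x => (G x, Real.sqrt α • x))
        (ρy.prod (Measure.dirac (0 : EuclideanSpace ℝ (Fin m)))) cpl),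
      ∫⁻ z, ENNReal.ofReal (‖z.1.1 - z.2.1‖ ^ 2 + ‖z.1.2 - z.2.2‖ ^ 2) ∂cpl) =
    (⨅ (γ : Measure (EuclideanSpace ℝ (Fin n) × EuclideanSpace ℝ (Fin n)))
      (_ : IsCoupling (ρ.map G) ρy γ),
      ∫⁻ z, ENNReal.ofReal (‖z.1 - z.2‖ ^ 2) ∂γ) +
    ∫⁻ x, ENNReal.ofReal (α * ‖x‖ ^ 2) ∂ρ :=
  stmt_8_general G hG α hα ρ ρy
end
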